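/- arXiv:math/0610762 — 4 statements merged into one kernel-verified Lean document; each statement's English description precedes it below -/
import Mathlib

section
/- Let N ≥ 2, α > 1, p > 0 and ξ = (αp)^{-1/α}. Let h be a positive C² function on (0,∞) satisfying h'' + ((N-1)/r)h' = (1/α)h^{-α} − p on (0,∞), with h not identically equal to ξ, and let r_1 < r_2 < r_3 < ⋯ be the increasing enumeration of its critical points {r > 0 : h'(r) = 0}. Then there exist positive constants C_1 and C_2 such that C_1 ≤ r_{k+1} − r_k ≤ C_2 for every k = 1, 2, 3, …. -/
open Set Filter

noncomputable section

lemma gap_lower (u u' u'' : ℝ → ℝ) (a b A B : ℝ) (hab : a < b)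
    (hA : 0 < A) (hB : 0 < B)
    (hd1 : ∀ x ∈ Icc a b, HasDerivAt u (u' x) x)
    (hd2 : ∀ x ∈ Icc a b, HasDerivAt u' (u'' x) x)
    (hbound : ∀ x ∈ Icc a b, |u'' x| ≤ A * |u' x| + B * |u x|)
    (hua : u a = 0) (hub : u b = 0)
    (hne : ∃ x ∈ Ioo a b, u x ≠ 0) :
    min (1 / (2 * A)) (1 / Real.sqrt (2 * B)) ≤ b - a := by
  have cu : ContinuousOn u (Icc a b) := fun x hx =>
    (hd1 x hx).continuousAt.continuousWithinAt
  have cu' : ContinuousOn u' (Icc a b) := fun x hx =>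
    (hd2 x hx).continuousAt.continuousWithinAt
  obtain ⟨c, hc, hcmax⟩ := isCompact_Icc.exists_isMaxOn (nonempty_Icc.2 hab.le)
    (continuous_abs.comp_continuousOn cu)
  obtain ⟨d, hd, hdmax⟩ := isCompact_Icc.exists_isMaxOn (nonempty_Icc.2 hab.le)
    (continuous_abs.comp_continuousOn cu')
  have hcmax' : ∀ x ∈ Icc a b, |u x| ≤ |u c| := fun x hx => hcmax hx
  have hdmax' : ∀ x ∈ Icc a b, |u' x| ≤ |u' d| := fun x hx => hdmax hx
  obtain ⟨x₀, hx₀, hux₀⟩ := hne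
  have hx₀' : x₀ ∈ Icc a b := Ioo_subset_Icc_self hx₀
  have hK₁pos : 0 < |u c| := lt_of_lt_of_le (abs_pos.2 hux₀) (hcmax' x₀ hx₀')
  have hK₂nn : 0 ≤ |u' d| := abs_nonneg _
  have hcIoo : c ∈ Ioo a b := by
    rcases eq_or_lt_of_le hc.1 with h1 | h1
    · exfalso; rw [← h1, hua, abs_zero] at hK₁pos; exact lt_irrefl 0 hK₁pos
    rcases eq_or_lt_of_le hc.2 with h2 | h2
    · exfalso; rw [h2, hub, abs_zero] at hK₁pos; exact lt_irrefl 0 hK₁pos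
    exact ⟨h1, h2⟩
  have hucne : u c ≠ 0 := by
    intro h0; rw [h0, abs_zero] at hK₁pos; exact lt_irrefl 0 hK₁pos
  have huc : u' c = 0 := by
    have hnhds : Ioo a b ∈ nhds c := isOpen_Ioo.mem_nhds hcIoo
    have hderiv : deriv u c = u' c := (hd1 c hc).deriv
    rcases lt_or_gt_of_ne hucne with hneg | hpos
    · have hmin : IsLocalMin u c := by
        filter_upwards [hnhds] with x hx
        have h1 : |u x| ≤ |u c| := hcmax' x (Ioo_subset_Icc_self hx)
        have h2 : u c = -|u c| := by rw [abs_of_neg hneg]; ring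
        have h3 : -|u x| ≤ u x := neg_abs_le _
        linarith
      rw [← hderiv, hmin.deriv_eq_zero]
    · have hmax : IsLocalMax u c := by
        filter_upwards [hnhds] with x hx
        have h1 : |u x| ≤ |u c| := hcmax' x (Ioo_subset_Icc_self hx)
        have h2 : u c = |u c| := (abs_of_pos hpos).symm
        have h3 : u x ≤ |u x| := le_abs_self _
        linarith
      rw [← hderiv, hmax.deriv_eq_zero]
  have hMb : ∀ x ∈ Icc a b, ‖u'' x‖ ≤ A * |u' d| + B * |u c| := by
    intro x hx
    calc ‖u'' x‖ = |u'' x| := rfl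
    _ ≤ A * |u' x| + B * |u x| := hbound x hx
    _ ≤ A * |u' d| + B * |u c| :=
        add_le_add (mul_le_mul_of_nonneg_left (hdmax' x hx) hA.le)
          (mul_le_mul_of_nonneg_left (hcmax' x hx) hB.le)
  have hK₂b : |u' d| ≤ (A * |u' d| + B * |u c|) * (b - a) := by
    have hmvt := (convex_Icc a b).norm_image_sub_le_of_norm_hasDerivWithin_le
      (fun z hz => (hd2 z hz).hasDerivWithinAt) hMb hc hd
    rw [huc, sub_zero] at hmvt
    have hMnn : 0 ≤ A * |u' d| + B * |u c| :=
      le_trans (norm_nonneg _) (hMb c hc)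
    have hdc : ‖d - c‖ ≤ b - a := by
      rw [Real.norm_eq_abs, abs_sub_le_iff]
      constructor
      · linarith [hd.2, hc.1]
      · linarith [hc.2, hd.1]
    calc |u' d| = ‖u' d‖ := rfl
    _ ≤ (A * |u' d| + B * |u c|) * ‖d - c‖ := hmvt
    _ ≤ (A * |u' d| + B * |u c|) * (b - a) := mul_le_mul_of_nonneg_left hdc hMnn
  have hK₁b : |u c| ≤ |u' d| * (b - a) := by
    have hmvt := (convex_Icc a b).norm_image_sub_le_of_norm_hasDerivWithin_le
      (fun z hz => (hd1 z hz).hasDerivWithinAt)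
      (fun z hz => hdmax' z hz) (left_mem_Icc.2 hab.le) hc
    rw [hua, sub_zero] at hmvt
    have hca : ‖c - a‖ ≤ b - a := by
      rw [Real.norm_eq_abs, abs_sub_le_iff]
      constructor
      · linarith [hc.2]
      · linarith [hc.1]
    calc |u c| = ‖u c‖ := rfl
    _ ≤ |u' d| * ‖c - a‖ := hmvt
    _ ≤ |u' d| * (b - a) := mul_le_mul_of_nonneg_left hca hK₂nn
  by_contra hcon
  push_neg at hcon
  have hLpos : 0 < b - a := by linarith
  have h1 : b - a < 1 / (2 * A) := lt_of_lt_of_le hcon (min_le_left _ _)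
  have h2 : b - a < 1 / Real.sqrt (2 * B) := lt_of_lt_of_le hcon (min_le_right _ _)
  have hAL : A * (b - a) ≤ 1 / 2 := by
    have hh : A * (1 / (2 * A)) = 1 / 2 := by field_simp
    nlinarith [mul_lt_mul_of_pos_left h1 hA]
  have hK₂b' : |u' d| ≤ 2 * B * |u c| * (b - a) := by
    nlinarith [hK₂b, mul_le_mul_of_nonneg_right hAL hK₂nn]
  have hh2 : |u' d| * (b - a) ≤ 2 * B * |u c| * (b - a) ^ 2 := by
    nlinarith [mul_le_mul_of_nonneg_right hK₂b' hLpos.le]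
  have hfin : 1 ≤ 2 * B * (b - a) ^ 2 := by
    nlinarith [hK₁b, hh2, hK₁pos]
  have hs : Real.sqrt (2 * B) * (b - a) < 1 := by
    rw [lt_div_iff₀ (Real.sqrt_pos.2 (by linarith))] at h2
    linarith
  have hsq : Real.sqrt (2 * B) ^ 2 = 2 * B := Real.sq_sqrt (by linarith)
  nlinarith [mul_nonneg (Real.sqrt_nonneg (2 * B)) hLpos.le, hs, hsq, hfin]


lemma sturm_nonosc (v v' v'' Q : ℝ → ℝ) (a m : ℝ) (hm : 0 < m)
    (hd1 : ∀ x ∈ Icc a (a + Real.pi / Real.sqrt m), HasDerivAt v (v' x) x)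
    (hd2 : ∀ x ∈ Icc a (a + Real.pi / Real.sqrt m), HasDerivAt v' (v'' x) x)
    (hode : ∀ x ∈ Icc a (a + Real.pi / Real.sqrt m), v'' x = -(Q x) * v x)
    (hQ : ∀ x ∈ Icc a (a + Real.pi / Real.sqrt m), m ≤ Q x)
    (hva : v a = 0)
    (hvpos : ∀ x ∈ Ioc a (a + Real.pi / Real.sqrt m), 0 < v x) : False := by
  set s := Real.sqrt m with hs
  have hspos : 0 < s := Real.sqrt_pos.2 hm
  have hs2 : s ^ 2 = m := Real.sq_sqrt hm.le
  set r := a + Real.pi / s with hr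
  have har : a < r := by
    have : 0 < Real.pi / s := div_pos Real.pi_pos hspos
    simp [hr]; linarith
  set W : ℝ → ℝ := fun x => v' x * Real.sin (s * (x - a)) - v x * (s * Real.cos (s * (x - a))) with hW
  have hphi : ∀ x : ℝ, HasDerivAt (fun y => Real.sin (s * (y - a))) (s * Real.cos (s * (x - a))) x := by
    intro x
    have h1 : HasDerivAt (fun y : ℝ => s * (y - a)) s x := by
      simpa using ((hasDerivAt_id x).sub_const a).const_mul s
    have := (Real.hasDerivAt_sin (s * (x - a))).comp x h1
    exact this.congr_deriv (by ring)
  have hpsi : ∀ x : ℝ, HasDerivAt (fun y => s * Real.cos (s * (y - a))) (-(s ^ 2 * Real.sin (s * (x - a)))) x := by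
    intro x
    have h1 : HasDerivAt (fun y : ℝ => s * (y - a)) s x := by
      simpa using ((hasDerivAt_id x).sub_const a).const_mul s
    have := ((Real.hasDerivAt_cos (s * (x - a))).comp x h1).const_mul s
    refine this.congr_deriv ?_
    ring
  have hWd : ∀ x ∈ Icc a r, HasDerivAt W ((m - Q x) * v x * Real.sin (s * (x - a))) x := by
    intro x hx
    have h1 := ((hd2 x hx).mul (hphi x)).sub ((hd1 x hx).mul (hpsi x))
    refine h1.congr_deriv ?_
    rw [hode x hx]
    rw [← hs2]
    ring
  have hanti : AntitoneOn W (Icc a r) := by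
    apply antitoneOn_of_deriv_nonpos (convex_Icc a r)
    · exact fun x hx => (hWd x hx).continuousAt.continuousWithinAt
    · intro x hx
      rw [interior_Icc] at hx
      exact ((hWd x (Ioo_subset_Icc_self hx)).differentiableAt).differentiableWithinAt
    · intro x hx
      rw [interior_Icc] at hx
      rw [(hWd x (Ioo_subset_Icc_self hx)).deriv]
      have hvx : 0 < v x := hvpos x ⟨hx.1, hx.2.le⟩
      have hQx : m ≤ Q x := hQ x (Ioo_subset_Icc_self hx)
      have hsin : 0 ≤ Real.sin (s * (x - a)) := by
        apply Real.sin_nonneg_of_nonneg_of_le_pi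
        · have hxa : 0 ≤ x - a := by linarith [hx.1]
          positivity
        · have : x - a ≤ Real.pi / s := by
            have := hx.2; simp [hr] at this; linarith
          calc s * (x - a) ≤ s * (Real.pi / s) := by
                apply mul_le_mul_of_nonneg_left this hspos.le
          _ = Real.pi := by field_simp
      nlinarith [mul_nonneg (mul_nonneg (sub_nonneg.2 hQx) hvx.le) hsin]
  have hWa : W a = 0 := by
    simp [hW, hva]
  have hWr : W r ≤ 0 := by
    have := hanti (left_mem_Icc.2 har.le) (right_mem_Icc.2 har.le) har.le
    rw [hWa] at this; exact this
  have hsr : s * (r - a) = Real.pi := by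
    rw [hr]; field_simp; ring
  have hWr' : W r = s * v r := by
    rw [hW]
    simp only [hsr, Real.sin_pi, Real.cos_pi]
    ring
  have hvr : 0 < v r := hvpos r ⟨har, le_refl r⟩
  nlinarith

lemma sturm_u (u u' u'' q : ℝ → ℝ) (n a m σ : ℝ) (hm : 0 < m)
    (hσ : σ = 1 ∨ σ = -1) (ha : 0 < a)
    (hd1 : ∀ x ∈ Icc a (a + Real.pi / Real.sqrt m), HasDerivAt u (u' x) x)
    (hd2 : ∀ x ∈ Icc a (a + Real.pi / Real.sqrt m), HasDerivAt u' (u'' x) x)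
    (hode : ∀ x ∈ Icc a (a + Real.pi / Real.sqrt m),
      u'' x = -(q x) * u x + (n - 1) / x ^ 2 * u x - (n - 1) / x * u' x)
    (hq : ∀ x ∈ Icc a (a + Real.pi / Real.sqrt m), m ≤ q x - (n ^ 2 - 1) / (4 * x ^ 2))
    (hua : u a = 0)
    (hupos : ∀ x ∈ Ioc a (a + Real.pi / Real.sqrt m), 0 < σ * u x) : False := by
  set r := a + Real.pi / Real.sqrt m with hr
  have hxpos : ∀ x ∈ Icc a r, 0 < x := fun x hx => lt_of_lt_of_le ha hx.1
  set c : ℝ := (n - 1) / 2 with hc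
  apply sturm_nonosc (fun x => σ * (x ^ c * u x))
    (fun x => σ * (c * x ^ (c - 1) * u x + x ^ c * u' x))
    (fun x => σ * (c * (c - 1) * x ^ (c - 2) * u x + 2 * c * x ^ (c - 1) * u' x + x ^ c * u'' x))
    (fun x => q x - (n ^ 2 - 1) / (4 * x ^ 2)) a m hm
  · intro x hx
    have hx0 := hxpos x hx
    have h1 := ((Real.hasDerivAt_rpow_const (p := c) (Or.inl hx0.ne')).mul (hd1 x hx)).const_mul σ
    exact h1
  · intro x hx
    have hx0 := hxpos x hx
    have p1 := (((Real.hasDerivAt_rpow_const (p := c - 1) (Or.inl hx0.ne')).const_mul c).mul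
      (hd1 x hx))
    have p2 := ((Real.hasDerivAt_rpow_const (p := c) (Or.inl hx0.ne')).mul (hd2 x hx))
    have h1 := (p1.add p2).const_mul σ
    have heq : c - 1 - 1 = c - 2 := by ring
    rw [← heq]
    refine h1.congr_deriv ?_
    ring
  · intro x hx
    have hx0 := hxpos x hx
    have hc1 : x ^ (c - 1) = x ^ c / x := by
      rw [Real.rpow_sub hx0, Real.rpow_one]
    have hc2 : x ^ (c - 2) = x ^ c / x ^ 2 := by
      rw [Real.rpow_sub hx0, show (2:ℝ) = ((2:ℕ):ℝ) by norm_num, Real.rpow_natCast]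
    rw [hode x hx, hc1, hc2, hc]
    field_simp
    ring
  · exact hq
  · simp [hua]
  · intro x hx
    have hx0 : 0 < x := lt_of_lt_of_le ha hx.1.le
    have h1 : 0 < x ^ c := Real.rpow_pos_of_pos hx0 c
    have h2 := hupos x hx
    have : σ * (x ^ c * u x) = x ^ c * (σ * u x) := by ring
    rw [this]
    exact mul_pos h1 h2

/-- First derivative of `deriv h` as given by the ODE. -/
def uD (N : ℕ) (α p : ℝ) (h : ℝ → ℝ) : ℝ → ℝ :=
  fun x => 1 / α * h x ^ (-α) - p - ((N : ℝ) - 1) / x * deriv h x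

/-- Second derivative of `deriv h` (obtained by differentiating the ODE). -/
def uDD (N : ℕ) (α p : ℝ) (h : ℝ → ℝ) : ℝ → ℝ :=
  fun x => -(h x ^ (-α - 1)) * deriv h x + ((N : ℝ) - 1) / x ^ 2 * deriv h x
    - ((N : ℝ) - 1) / x * uD N α p h x

/-- Energy of a solution. -/
def En (α p : ℝ) (h : ℝ → ℝ) : ℝ → ℝ :=
  fun x => 1 / 2 * (deriv h x) ^ 2 + p * h x + h x ^ (1 - α) / (α * (α - 1))

set_option maxHeartbeats 2000000 in
/-- For a nontrivial positive global `C²` solution of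
`h'' + ((N-1)/r) h' = (1/α) h^(-α) - p` on `(0,∞)` with critical points enumerated as a
strictly increasing sequence `(r_k)`, the gaps `r_{k+1} - r_k` are bounded above and
below by positive constants. -/
theorem critical_point_gaps_bounded
    (N : ℕ) (hN : 2 ≤ N) (α p : ℝ) (hα : 1 < α) (hp : 0 < p)
    (ξ : ℝ) (hξ : ξ = (α * p) ^ (-(1 / α)))
    (h : ℝ → ℝ)
    (hpos : ∀ r ∈ Ioi (0 : ℝ), 0 < h r)
    (hreg : ContDiffOn ℝ 2 h (Ioi 0))
    (hode : ∀ r ∈ Ioi (0 : ℝ),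
      deriv (deriv h) r + ((N : ℝ) - 1) / r * deriv h r = 1 / α * h r ^ (-α) - p)
    (hnontriv : ¬ ∀ r ∈ Ioi (0 : ℝ), h r = ξ)
    (rk : ℕ → ℝ) (hmono : StrictMono rk) (hrkpos : ∀ k, 0 < rk k)
    (hrange : {r : ℝ | 0 < r ∧ deriv h r = 0} = Set.range rk) :
    ∃ C₁ C₂ : ℝ, 0 < C₁ ∧ 0 < C₂ ∧
      ∀ k : ℕ, C₁ ≤ rk (k + 1) - rk k ∧ rk (k + 1) - rk k ≤ C₂ := by
  have hα0 : (0:ℝ) < α := by linarith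
  have hα1 : (0:ℝ) < α - 1 := by linarith
  have hNr : (1:ℝ) ≤ (N:ℝ) - 1 := by
    have : (2:ℝ) ≤ (N:ℝ) := by exact_mod_cast hN
    linarith
  have hr₀pos : 0 < rk 0 := hrkpos 0
  -- critical point facts
  have hcrit : ∀ k, deriv h (rk k) = 0 := by
    intro k
    have : rk k ∈ {r : ℝ | 0 < r ∧ deriv h r = 0} := by
      rw [hrange]; exact mem_range_self k
    exact this.2
  have hnocrit : ∀ k, ∀ x, rk k < x → x < rk (k+1) → deriv h x ≠ 0 := by
    intro k x h1 h2 hx0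
    have hxpos : 0 < x := lt_trans (hrkpos k) h1
    have hmem : x ∈ {r : ℝ | 0 < r ∧ deriv h r = 0} := ⟨hxpos, hx0⟩
    rw [hrange] at hmem
    obtain ⟨m, hm⟩ := hmem
    rcases lt_trichotomy m (k+1) with hmk | hmk | hmk
    · have hmk' : m ≤ k := Nat.lt_succ_iff.1 hmk
      have := hmono.monotone hmk'
      rw [hm] at this
      linarith
    · rw [hmk] at hm; linarith
    · have := hmono.monotone (le_of_lt hmk)
      rw [hm] at this
      linarith
  -- regularity
  have hdiff1 : ∀ x ∈ Ioi (0:ℝ), HasDerivAt h (deriv h x) x := by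
    intro x hx
    exact ((hreg.differentiableOn (by norm_num)).differentiableAt
      (isOpen_Ioi.mem_nhds hx)).hasDerivAt
  have hu_cd : ContDiffOn ℝ 1 (deriv h) (Ioi 0) :=
    hreg.deriv_of_isOpen isOpen_Ioi (by norm_num)
  have hdiff2 : ∀ x ∈ Ioi (0:ℝ), HasDerivAt (deriv h) (uD N α p h x) x := by
    intro x hx
    have h1 : HasDerivAt (deriv h) (deriv (deriv h) x) x :=
      ((hu_cd.differentiableOn one_ne_zero).differentiableAt (isOpen_Ioi.mem_nhds hx)).hasDerivAt
    have h2 := hode x hx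
    have h3 : deriv (deriv h) x = uD N α p h x := by
      simp only [uD]; linarith
    rwa [h3] at h1
  have hdiff3 : ∀ x ∈ Ioi (0:ℝ), HasDerivAt (uD N α p h) (uDD N α p h x) x := by
    intro x hx
    have hx0 : (0:ℝ) < x := hx
    have hhx : 0 < h x := hpos x hx
    have t1 : HasDerivAt (fun y => 1 / α * h y ^ (-α))
        (1 / α * (deriv h x * (-α) * h x ^ (-α - 1))) x :=
      ((hdiff1 x hx).rpow_const (Or.inl hhx.ne')).const_mul (1 / α)
    have t2 : HasDerivAt (fun y : ℝ => ((N:ℝ) - 1) / y) (-(((N:ℝ) - 1) / x ^ 2)) x := by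
      have h5 := (hasDerivAt_inv hx0.ne').const_mul ((N:ℝ) - 1)
      refine h5.congr_deriv ?_
      ring
    have t3 : HasDerivAt (fun y => ((N:ℝ) - 1) / y * deriv h y)
        (-(((N:ℝ) - 1) / x ^ 2) * deriv h x + ((N:ℝ) - 1) / x * uD N α p h x) x :=
      t2.mul (hdiff2 x hx)
    have t4 := (t1.sub_const p).sub t3
    have t5 : HasDerivAt (uD N α p h)
        (1 / α * (deriv h x * (-α) * h x ^ (-α - 1))
          - (-(((N:ℝ) - 1) / x ^ 2) * deriv h x + ((N:ℝ) - 1) / x * uD N α p h x)) x := t4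
    convert t5 using 1
    simp only [uDD]
    field_simp
    ring
  -- energy decreasing
  have hdiffE : ∀ x ∈ Ioi (0:ℝ), HasDerivAt (En α p h)
      (-(((N:ℝ) - 1) / x) * (deriv h x) ^ 2) x := by
    intro x hx
    have hhx : 0 < h x := hpos x hx
    have e1 : HasDerivAt (fun y => 1 / 2 * (deriv h y) ^ 2)
        (1 / 2 * (2 * deriv h x ^ 1 * uD N α p h x)) x :=
      ((hdiff2 x hx).pow 2).const_mul (1 / 2)
    have e2 : HasDerivAt (fun y => p * h y) (p * deriv h x) x :=
      (hdiff1 x hx).const_mul p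
    have e3 : HasDerivAt (fun y => h y ^ (1 - α) / (α * (α - 1)))
        (deriv h x * (1 - α) * h x ^ (1 - α - 1) / (α * (α - 1))) x :=
      ((hdiff1 x hx).rpow_const (Or.inl hhx.ne')).div_const _
    have e4 := (e1.add e2).add e3
    refine e4.congr_deriv ?_
    rw [show (1:ℝ) - α - 1 = -α by ring]
    simp only [uD]
    have hx0 : x ≠ 0 := (ne_of_gt hx)
    field_simp
    ring
  have hEanti : AntitoneOn (En α p h) (Ici (rk 0)) := by
    apply antitoneOn_of_deriv_nonpos (convex_Ici (rk 0))
    · intro x hx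
      exact (hdiffE x (lt_of_lt_of_le hr₀pos hx)).continuousAt.continuousWithinAt
    · intro x hx
      rw [interior_Ici] at hx
      exact (hdiffE x (lt_trans hr₀pos hx)).differentiableAt.differentiableWithinAt
    · intro x hx
      rw [interior_Ici] at hx
      have hx0 : (0:ℝ) < x := lt_trans hr₀pos hx
      rw [(hdiffE x hx0).deriv]
      have h1 : 0 ≤ ((N:ℝ) - 1) / x := div_nonneg (by linarith) hx0.le
      nlinarith [sq_nonneg (deriv h x)]
  have hE₀pos : 0 < En α p h (rk 0) := by
    simp only [En]
    have h1 : 0 < h (rk 0) := hpos _ hr₀pos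
    have h2 : 0 < h (rk 0) ^ (1 - α) := Real.rpow_pos_of_pos h1 _
    have h3 : 0 < α * (α - 1) := mul_pos hα0 hα1
    have h4 : 0 < h (rk 0) ^ (1 - α) / (α * (α - 1)) := div_pos h2 h3
    nlinarith [sq_nonneg (deriv h (rk 0)), mul_pos hp h1]
  obtain ⟨E₀, hE₀⟩ : ∃ e : ℝ, e = En α p h (rk 0) := ⟨_, rfl⟩
  rw [← hE₀] at hE₀pos
  have hEle : ∀ x, rk 0 ≤ x → En α p h x ≤ E₀ := by
    intro x hx; rw [hE₀]; exact hEanti (self_mem_Ici) hx hx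
  have hterms : ∀ x, rk 0 ≤ x →
      p * h x ≤ E₀ ∧ h x ^ (1 - α) / (α * (α - 1)) ≤ E₀ := by
    intro x hx
    have hx0 : (0:ℝ) < x := lt_of_lt_of_le hr₀pos hx
    have h1 : 0 < h x := hpos x hx0
    have h2 : 0 < h x ^ (1 - α) := Real.rpow_pos_of_pos h1 _
    have h3 : 0 < α * (α - 1) := mul_pos hα0 hα1
    have h4 := hEle x hx
    simp only [En] at h4
    constructor
    · nlinarith [sq_nonneg (deriv h x), div_pos h2 h3]
    · nlinarith [sq_nonneg (deriv h x), mul_pos hp h1]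
  -- upper and lower bounds for h
  obtain ⟨bU, hbU⟩ : ∃ e : ℝ, e = E₀ / p := ⟨_, rfl⟩
  have hbUpos : 0 < bU := by rw [hbU]; exact div_pos hE₀pos hp
  have hhub : ∀ x, rk 0 ≤ x → h x ≤ bU := by
    intro x hx
    rw [hbU, le_div_iff₀ hp]
    have := (hterms x hx).1
    linarith [this]
  obtain ⟨aL, haL⟩ : ∃ e : ℝ, e = (α * (α - 1) * E₀) ^ (1 / (1 - α)) := ⟨_, rfl⟩
  have hcpos : 0 < α * (α - 1) * E₀ := mul_pos (mul_pos hα0 hα1) hE₀pos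
  have haLpos : 0 < aL := by rw [haL]; exact Real.rpow_pos_of_pos hcpos _
  have hhlb : ∀ x, rk 0 ≤ x → aL ≤ h x := by
    intro x hx
    have hx0 : (0:ℝ) < x := lt_of_lt_of_le hr₀pos hx
    have h1 : 0 < h x := hpos x hx0
    have h2 : h x ^ (1 - α) ≤ α * (α - 1) * E₀ := by
      have h3 := (hterms x hx).2
      have h4 : 0 < α * (α - 1) := mul_pos hα0 hα1
      rw [div_le_iff₀ h4] at h3
      nlinarith
    have h5 : (1:ℝ) / (1 - α) ≤ 0 :=
      le_of_lt (div_neg_of_pos_of_neg one_pos (by linarith))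
    have h6 := Real.rpow_le_rpow_of_nonpos (Real.rpow_pos_of_pos h1 (1 - α)) h2 h5
    have h7 : (h x ^ (1 - α)) ^ ((1:ℝ) / (1 - α)) = h x := by
      rw [← Real.rpow_mul h1.le]
      rw [mul_one_div_cancel (by linarith : (1:ℝ) - α ≠ 0)]
      exact Real.rpow_one _
    rw [h7] at h6
    rw [haL]
    exact h6
  -- coefficient bounds
  have hqlb : ∀ x, rk 0 ≤ x → bU ^ (-α - 1) ≤ h x ^ (-α - 1) := by
    intro x hx
    exact Real.rpow_le_rpow_of_nonpos (hpos x (lt_of_lt_of_le hr₀pos hx)) (hhub x hx)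
      (by linarith)
  have hqub : ∀ x, rk 0 ≤ x → h x ^ (-α - 1) ≤ aL ^ (-α - 1) := by
    intro x hx
    exact Real.rpow_le_rpow_of_nonpos haLpos (hhlb x hx) (by linarith)
  -- rk is unbounded
  have hunb : ∀ R : ℝ, ∃ K, R ≤ rk K := by
    intro R
    by_contra hcon
    push_neg at hcon
    have hbdd : BddAbove (Set.range rk) := ⟨R, by rintro y ⟨k, rfl⟩; exact (hcon k).le⟩
    have htend := tendsto_atTop_ciSup hmono.monotone hbdd
    have hLpos : 0 < ⨆ i, rk i := lt_of_lt_of_le (hrkpos 0) (le_ciSup hbdd 0)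
    have hucont : ContinuousAt (deriv h) (⨆ i, rk i) :=
      (hu_cd.continuousOn).continuousAt (isOpen_Ioi.mem_nhds hLpos)
    have h0 : Tendsto (fun n => deriv h (rk n)) atTop (nhds (deriv h (⨆ i, rk i))) :=
      (hucont.tendsto).comp htend
    have h1 : (fun n => deriv h (rk n)) = fun _ => (0:ℝ) := funext fun n => hcrit n
    rw [h1] at h0
    have h2 : deriv h (⨆ i, rk i) = 0 := tendsto_nhds_unique h0 tendsto_const_nhds
    have hmem : (⨆ i, rk i) ∈ {r : ℝ | 0 < r ∧ deriv h r = 0} := ⟨hLpos, h2⟩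
    rw [hrange] at hmem
    obtain ⟨mK, hmK⟩ := hmem
    have h3 := hmono (Nat.lt_succ_self mK)
    have h4 : rk (mK+1) ≤ ⨆ i, rk i := le_ciSup hbdd (mK+1)
    rw [hmK] at h3
    linarith
  -- constants
  obtain ⟨A, hA⟩ : ∃ e : ℝ, e = ((N:ℝ) - 1) / rk 0 := ⟨_, rfl⟩
  have hApos : 0 < A := by rw [hA]; exact div_pos (by linarith) hr₀pos
  obtain ⟨B, hB⟩ : ∃ e : ℝ, e = ((N:ℝ) - 1) / (rk 0) ^ 2 + aL ^ (-α - 1) := ⟨_, rfl⟩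
  have hBpos : 0 < B := by
    rw [hB]
    exact add_pos (div_pos (by linarith) (by positivity)) (Real.rpow_pos_of_pos haLpos _)
  obtain ⟨mc, hmc⟩ : ∃ e : ℝ, e = bU ^ (-α - 1) := ⟨_, rfl⟩
  have hmcpos : 0 < mc := by rw [hmc]; exact Real.rpow_pos_of_pos hbUpos _
  have hmpos : 0 < mc / 2 := by linarith
  obtain ⟨Rv, hRv⟩ : ∃ e : ℝ, e = Real.sqrt (((N:ℝ) ^ 2 - 1) / (2 * mc)) := ⟨_, rfl⟩
  obtain ⟨K, hK⟩ := hunb (max (rk 0) Rv)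
  have hDpos : (0:ℝ) < (N:ℝ) ^ 2 - 1 := by
    have h1 : (0:ℝ) < ((N:ℝ) - 1) * ((N:ℝ) + 1) := mul_pos (by linarith) (by linarith)
    have h2 : ((N:ℝ) - 1) * ((N:ℝ) + 1) = (N:ℝ) ^ 2 - 1 := by ring
    linarith
  refine ⟨min (1 / (2 * A)) (1 / Real.sqrt (2 * B)),
    max (Real.pi / Real.sqrt (mc / 2)) (rk K - rk 0), ?_, ?_, fun k => ⟨?_, ?_⟩⟩
  · apply lt_min
    · positivity
    · have : 0 < Real.sqrt (2 * B) := Real.sqrt_pos.2 (by linarith)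
      positivity
  · exact lt_of_lt_of_le (div_pos Real.pi_pos (Real.sqrt_pos.2 hmpos)) (le_max_left _ _)
  · -- lower bound on the gap
    have hab : rk k < rk (k+1) := hmono (Nat.lt_succ_self k)
    have hsub : Icc (rk k) (rk (k+1)) ⊆ Ici (rk 0) := by
      intro x hx
      exact le_trans (hmono.monotone (Nat.zero_le k)) hx.1
    have hsub0 : Icc (rk k) (rk (k+1)) ⊆ Ioi 0 := fun x hx =>
      lt_of_lt_of_le (hrkpos k) hx.1
    have hbnd : ∀ x ∈ Icc (rk k) (rk (k+1)),
        |uDD N α p h x| ≤ A * |uD N α p h x| + B * |deriv h x| := by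
      intro x hx
      have hx0 : (0:ℝ) < x := hsub0 hx
      have hxr : rk 0 ≤ x := hsub hx
      simp only [uDD]
      have tri : |(-(h x ^ (-α - 1)) * deriv h x + ((N:ℝ) - 1) / x ^ 2 * deriv h x
          - ((N:ℝ) - 1) / x * uD N α p h x)|
          ≤ |h x ^ (-α - 1)| * |deriv h x| + |((N:ℝ) - 1) / x ^ 2| * |deriv h x|
            + |((N:ℝ) - 1) / x| * |uD N α p h x| := by
        calc _ ≤ |(-(h x ^ (-α - 1)) * deriv h x + ((N:ℝ) - 1) / x ^ 2 * deriv h x)|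
              + |((N:ℝ) - 1) / x * uD N α p h x| := abs_sub _ _
        _ ≤ _ := by
            rw [abs_mul]
            have := abs_add_le (-(h x ^ (-α - 1)) * deriv h x) (((N:ℝ) - 1) / x ^ 2 * deriv h x)
            rw [abs_mul, abs_mul, abs_neg] at this
            linarith
      have c1 : |h x ^ (-α - 1)| ≤ aL ^ (-α - 1) := by
        rw [abs_of_pos (Real.rpow_pos_of_pos (hpos x hx0) _)]
        exact hqub x hxr
      have c2 : |((N:ℝ) - 1) / x ^ 2| ≤ ((N:ℝ) - 1) / (rk 0) ^ 2 := by
        have hx2 : (rk 0) ^ 2 ≤ x ^ 2 := by nlinarith [hxr, hr₀pos]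
        have hb2 : (0:ℝ) < (rk 0) ^ 2 := by positivity
        rw [abs_of_nonneg (div_nonneg (by linarith) (sq_nonneg x))]
        exact div_le_div_of_nonneg_left (by linarith) hb2 hx2
      have c3 : |((N:ℝ) - 1) / x| ≤ A := by
        rw [abs_of_nonneg (div_nonneg (by linarith) hx0.le), hA]
        exact div_le_div_of_nonneg_left (by linarith) hr₀pos (hsub hx)
      have habs1 : (0:ℝ) ≤ |deriv h x| := abs_nonneg _
      have habs2 : (0:ℝ) ≤ |uD N α p h x| := abs_nonneg _
      rw [hB]
      nlinarith [mul_le_mul_of_nonneg_right c1 habs1, mul_le_mul_of_nonneg_right c2 habs1,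
        mul_le_mul_of_nonneg_right c3 habs2]
    have := gap_lower (deriv h) (uD N α p h) (uDD N α p h) (rk k) (rk (k+1)) A B hab hApos hBpos
      (fun x hx => hdiff2 x (hsub0 hx)) (fun x hx => hdiff3 x (hsub0 hx)) hbnd
      (hcrit k) (hcrit (k+1))
      ⟨(rk k + rk (k+1)) / 2, ⟨by linarith, by linarith⟩,
        hnocrit k _ (by linarith) (by linarith)⟩
    exact this
  · -- upper bound on the gap
    rcases lt_or_ge k K with hkK | hkK
    · have h1 : rk (k+1) ≤ rk K := hmono.monotone (Nat.succ_le_of_lt hkK)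
      have h2 : rk 0 ≤ rk k := hmono.monotone (Nat.zero_le k)
      have h3 : rk (k+1) - rk k ≤ rk K - rk 0 := by linarith
      exact le_trans h3 (le_max_right _ _)
    · -- k ≥ K : Sturm comparison
      by_contra hcon
      push_neg at hcon
      have hgap : Real.pi / Real.sqrt (mc / 2) < rk (k+1) - rk k :=
        lt_of_le_of_lt (le_max_left _ _) hcon
      set a := rk k with ha'
      set b := rk (k+1) with hb'
      have haR : max (rk 0) Rv ≤ a := le_trans hK (hmono.monotone hkK)
      have har0 : rk 0 ≤ a := le_trans (le_max_left _ _) haR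
      have haRv : Rv ≤ a := le_trans (le_max_right _ _) haR
      have hapos : 0 < a := lt_of_lt_of_le hr₀pos har0
      set r := a + Real.pi / Real.sqrt (mc / 2) with hr'
      have harb : r < b := by rw [hr']; linarith
      have haar : a < r := by
        have : 0 < Real.pi / Real.sqrt (mc / 2) :=
          div_pos Real.pi_pos (Real.sqrt_pos.2 hmpos)
        rw [hr']; linarith
      have hsub : Icc a r ⊆ Ioi (0:ℝ) := fun x hx => lt_of_lt_of_le hapos hx.1
      have hsubr : Icc a r ⊆ Ici (rk 0) := fun x hx => le_trans har0 hx.1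
      -- sign of the derivative on (a, b)
      have hne : ∀ x, a < x → x < b → deriv h x ≠ 0 := fun x h1 h2 => hnocrit k x h1 h2
      have hab : a < b := hmono (Nat.lt_succ_self k)
      have hcont : ∀ x y, a < x → x ≤ y → y < b → ContinuousOn (deriv h) (Icc x y) := by
        intro x y h1 h2 h3 z hz
        exact (hdiff2 z (lt_trans hapos (lt_of_lt_of_le h1 hz.1))).continuousAt.continuousWithinAt
      have hsign : (∀ x, a < x → x < b → 0 < deriv h x) ∨
          (∀ x, a < x → x < b → deriv h x < 0) := by
        by_contra hcon2
        push_neg at hcon2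
        obtain ⟨⟨x, hx1, hx2, hx3⟩, ⟨y, hy1, hy2, hy3⟩⟩ := hcon2
        have hxneg : deriv h x < 0 := lt_of_le_of_ne hx3 (hne x hx1 hx2)
        have hypos : 0 < deriv h y := lt_of_le_of_ne (hy3) (Ne.symm (hne y hy1 hy2))
        rcases lt_trichotomy x y with hxy | hxy | hxy
        · obtain ⟨z, hz, hz0⟩ := intermediate_value_Icc hxy.le (hcont x y hx1 hxy.le hy2)
            (⟨hxneg.le, hypos.le⟩ : (0:ℝ) ∈ Icc (deriv h x) (deriv h y))
          exact hne z (lt_of_lt_of_le hx1 hz.1) (lt_of_le_of_lt hz.2 hy2) hz0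
        · rw [hxy] at hxneg; linarith
        · obtain ⟨z, hz, hz0⟩ := intermediate_value_Icc' hxy.le (hcont y x hy1 hxy.le hx2)
            (⟨hxneg.le, hypos.le⟩ : (0:ℝ) ∈ Icc (deriv h x) (deriv h y))
          exact hne z (lt_of_lt_of_le hy1 hz.1) (lt_of_le_of_lt hz.2 hx2) hz0
      have hqbound : ∀ x ∈ Icc a r, mc / 2 ≤ h x ^ (-α - 1) - ((N:ℝ) ^ 2 - 1) / (4 * x ^ 2) := by
        intro x hx
        have hx0 : (0:ℝ) < x := hsub hx
        have hxRv : Rv ≤ x := le_trans haRv hx.1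
        have h1 : mc ≤ h x ^ (-α - 1) := by rw [hmc]; exact hqlb x (hsubr hx)
        have hx2 : ((N:ℝ) ^ 2 - 1) / (2 * mc) ≤ x ^ 2 := by
          have hRvnn : (0:ℝ) ≤ ((N:ℝ) ^ 2 - 1) / (2 * mc) := by positivity
          have := Real.sq_sqrt hRvnn
          rw [hRv] at hxRv
          nlinarith [Real.sqrt_nonneg (((N:ℝ) ^ 2 - 1) / (2 * mc))]
        have h2 : ((N:ℝ) ^ 2 - 1) / (4 * x ^ 2) ≤ mc / 2 := by
          rw [div_le_iff₀ (by positivity)]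
          rw [div_le_iff₀ (by positivity)] at hx2
          nlinarith
        linarith
      have hodeIcc : ∀ x ∈ Icc a r, uDD N α p h x =
          -(h x ^ (-α - 1)) * deriv h x + ((N:ℝ) - 1) / x ^ 2 * deriv h x
            - ((N:ℝ) - 1) / x * uD N α p h x := fun x _ => rfl
      rcases hsign with hsgn | hsgn
      · exact sturm_u (deriv h) (uD N α p h) (uDD N α p h) (fun x => h x ^ (-α - 1))
          (N:ℝ) a (mc / 2) 1 hmpos (Or.inl rfl) hapos
          (fun x hx => hdiff2 x (hsub hx)) (fun x hx => hdiff3 x (hsub hx))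
          hodeIcc hqbound (hcrit k)
          (fun x hx => by
            have := hsgn x hx.1 (lt_of_le_of_lt hx.2 harb)
            simpa using this)
      · exact sturm_u (deriv h) (uD N α p h) (uDD N α p h) (fun x => h x ^ (-α - 1))
          (N:ℝ) a (mc / 2) (-1) hmpos (Or.inr rfl) hapos
          (fun x hx => hdiff2 x (hsub hx)) (fun x hx => hdiff3 x (hsub hx))
          hodeIcc hqbound (hcrit k)
          (fun x hx => by
            have := hsgn x hx.1 (lt_of_le_of_lt hx.2 harb)
            simpa using this)
end
end

section
/- Let N ≥ 2, α > 1, p > 0 and ξ = (αp)^{-1/α}. Let h be a positive C² function on (0,∞) satisfying h'' + ((N-1)/r)h' = (1/α)h^{-α} − p on (0,∞). Then lim_{r→∞} h(r) = ξ. -/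
open Set Filter
noncomputable section

/-- The nonlinearity `f(x) = p - x^(-α)/α` (so the ODE is `h'' + (c/r)h' + f(h) = 0`). -/
def ffXi (α p x : ℝ) : ℝ := p - x ^ (-α) / α

/-- The potential `V` with `V' = f`. -/
def fVXi (α p x : ℝ) : ℝ := p * x + x ^ (1 - α) / (α * (α - 1))

lemma hasDerivAt_fVXi {α p x : ℝ} (hα : 1 < α) (hx : 0 < x) :
    HasDerivAt (fVXi α p) (ffXi α p x) x := by
  have h1 : HasDerivAt (fun y : ℝ => y ^ (1 - α)) ((1 - α) * x ^ (1 - α - 1)) x :=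
    Real.hasDerivAt_rpow_const (Or.inl hx.ne')
  have h2 : HasDerivAt (fun y : ℝ => p * y + y ^ (1 - α) / (α * (α - 1)))
      (p * 1 + (1 - α) * x ^ (1 - α - 1) / (α * (α - 1))) x :=
    ((hasDerivAt_id x).const_mul p).add (h1.div_const _)
  have hα0 : (0:ℝ) < α := lt_trans one_pos hα
  refine h2.congr_deriv ?_
  have he : (1 : ℝ) - α - 1 = -α := by ring
  rw [he]
  have h3 : (α - 1) ≠ 0 := ne_of_gt (by linarith)
  have key : (1 - α) * x ^ (-α) / (α * (α - 1)) = -(x ^ (-α) / α) := by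
    rw [show (1 - α) * x ^ (-α) = -((α - 1) * x ^ (-α)) by ring,
      show α * (α - 1) = (α - 1) * α by ring, neg_div, mul_div_mul_left _ _ h3]
  rw [key, mul_one]
  unfold ffXi
  ring

lemma hasDerivAt_ffXi {α p x : ℝ} (hα : 1 < α) (hx : 0 < x) :
    HasDerivAt (ffXi α p) (x ^ (-α - 1)) x := by
  have h1 : HasDerivAt (fun y : ℝ => y ^ (-α)) ((-α) * x ^ (-α - 1)) x :=
    Real.hasDerivAt_rpow_const (Or.inl hx.ne')
  have hα0 : (0:ℝ) < α := lt_trans one_pos hα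
  have h2 : HasDerivAt (fun y : ℝ => p - y ^ (-α) / α)
      (0 - (-α) * x ^ (-α - 1) / α) x := (hasDerivAt_const x p).sub (h1.div_const _)
  refine h2.congr_deriv ?_
  field_simp
  ring

lemma fVXi_pos {α p x : ℝ} (hα : 1 < α) (hp : 0 < p) (hx : 0 < x) : 0 < fVXi α p x := by
  have h1 : 0 < x ^ (1 - α) := Real.rpow_pos_of_pos hx _
  have h2 : 0 < α * (α - 1) := mul_pos (lt_trans one_pos hα) (by linarith)
  have := mul_pos hp hx
  have := div_pos h1 h2
  unfold fVXi; linarith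

lemma ffXi_neg_of_lt {α p ξ x : ℝ} (hα : 1 < α) (hξα : ξ ^ (-α) = α * p)
    (hx : 0 < x) (hlt : x < ξ) : ffXi α p x < 0 := by
  have hα0 : (0:ℝ) < α := lt_trans one_pos hα
  have h1 : ξ ^ (-α) < x ^ (-α) := Real.rpow_lt_rpow_of_neg hx hlt (by linarith)
  rw [hξα] at h1
  have : p < x ^ (-α) / α := (lt_div_iff₀ hα0).2 (by linarith [h1])
  unfold ffXi; linarith

lemma ffXi_pos_of_gt {α p ξ x : ℝ} (hα : 1 < α) (hξ0 : 0 < ξ) (hξα : ξ ^ (-α) = α * p)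
    (hlt : ξ < x) : 0 < ffXi α p x := by
  have hα0 : (0:ℝ) < α := lt_trans one_pos hα
  have h1 : x ^ (-α) < ξ ^ (-α) := Real.rpow_lt_rpow_of_neg hξ0 hlt (by linarith)
  rw [hξα] at h1
  have : x ^ (-α) / α < p := (div_lt_iff₀ hα0).2 (by linarith [h1])
  unfold ffXi; linarith

lemma ffXi_ne_zero {α p ξ x : ℝ} (hα : 1 < α) (hξ0 : 0 < ξ) (hξα : ξ ^ (-α) = α * p)
    (hx : 0 < x) (hne : x ≠ ξ) : ffXi α p x ≠ 0 := by
  rcases lt_or_gt_of_ne hne with hc | hc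
  · exact ne_of_lt (ffXi_neg_of_lt hα hξα hx hc)
  · exact ne_of_gt (ffXi_pos_of_gt hα hξ0 hξα hc)

lemma fVXi_strict_min {α p ξ x : ℝ} (hα : 1 < α) (hξ0 : 0 < ξ) (hξα : ξ ^ (-α) = α * p)
    (hx : 0 < x) (hne : x ≠ ξ) : fVXi α p ξ < fVXi α p x := by
  rcases lt_or_gt_of_ne hne with hc | hc
  · have hanti : StrictAntiOn (fVXi α p) (Ioc 0 ξ) := by
      apply strictAntiOn_of_deriv_neg (convex_Ioc 0 ξ)
      · exact fun y hy => (hasDerivAt_fVXi hα hy.1).continuousAt.continuousWithinAt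
      · intro y hy
        rw [interior_Ioc] at hy
        rw [(hasDerivAt_fVXi hα hy.1).deriv]
        exact ffXi_neg_of_lt hα hξα hy.1 hy.2
    exact hanti ⟨hx, hc.le⟩ ⟨hξ0, le_refl _⟩ hc
  · have hmono : StrictMonoOn (fVXi α p) (Ici ξ) := by
      apply strictMonoOn_of_deriv_pos (convex_Ici ξ)
      · exact fun y hy => (hasDerivAt_fVXi hα (lt_of_lt_of_le hξ0 hy)).continuousAt.continuousWithinAt
      · intro y hy
        rw [interior_Ici] at hy
        rw [(hasDerivAt_fVXi hα (lt_trans hξ0 hy)).deriv]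
        exact ffXi_pos_of_gt hα hξ0 hξα hy
    exact hmono (self_mem_Ici) hc.le hc

lemma pos_min_on_compact {g : ℝ → ℝ} {S : Set ℝ} (hS : IsCompact S)
    (hg : ContinuousOn g S) (hposg : ∀ x ∈ S, 0 < g x) :
    ∃ κ > (0:ℝ), ∀ x ∈ S, κ ≤ g x := by
  rcases S.eq_empty_or_nonempty with rfl | hne
  · exact ⟨1, one_pos, by simp⟩
  · obtain ⟨x₀, hx₀, hmin⟩ := hS.exists_isMinOn hne hg
    exact ⟨g x₀, hposg x₀ hx₀, fun x hx => isMinOn_iff.1 hmin x hx⟩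

/-- The energy function of a solution. -/
def EXi (α p : ℝ) (h : ℝ → ℝ) (r : ℝ) : ℝ := deriv h r ^ 2 / 2 + fVXi α p (h r)

lemma keyIneq (c ε c₁ θ B K vb F₀ v F P w r : ℝ) (hr1 : 1 ≤ r) (hc0 : 0 < c)
    (hε0 : 0 < ε) (hεK : ε*K = c/2) (hPK : P ≤ K)
    (hc₁c : c₁ ≤ c/2) (hc₁ε : c₁ ≤ ε) (hc₁0 : 0 ≤ c₁)
    (hθ : θ ≤ v^2 + F^2) (hvF : |v*F| ≤ vb*F₀) (hB : B = ε*(c+1)*vb*F₀)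
    (hwF : w = -F - c/r * v) :
    -(c/r) * v^2 + ε * ((w * F + v * (P*v)) * r⁻¹ + v*F * -(r^2)⁻¹)
      + c₁*θ*r⁻¹ + B * -(r^2)⁻¹ ≤ 0 := by
  subst hwF
  have h0r : (0:ℝ) < r := lt_of_lt_of_le one_pos hr1
  have hr2 : (0:ℝ) < r^2 := by positivity
  have expand : -(c/r) * v^2 + ε * (((-F - c/r * v) * F + v * (P*v)) * r⁻¹ + v*F * -(r^2)⁻¹)
      + c₁*θ*r⁻¹ + B * -(r^2)⁻¹
      = ((-(c) * v^2 - ε*F^2 + ε*(P*v^2) + c₁*θ) * r + (-(ε*(c+1)*(v*F)) - B)) / r^2 := by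
    field_simp
    ring
  rw [expand]
  have e1 : ε*(P*v^2) ≤ c/2*v^2 := by
    have h1 : ε*P ≤ ε*K := mul_le_mul_of_nonneg_left hPK hε0.le
    rw [hεK] at h1
    calc ε*(P*v^2) = (ε*P)*v^2 := by ring
      _ ≤ (c/2)*v^2 := mul_le_mul_of_nonneg_right h1 (sq_nonneg _)
  have e2 : c₁*θ ≤ c/2*v^2 + ε*F^2 := by
    have h1 : c₁*θ ≤ c₁*(v^2 + F^2) := mul_le_mul_of_nonneg_left hθ hc₁0
    nlinarith [sq_nonneg v, sq_nonneg F]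
  have hA0 : -(c) * v^2 - ε*F^2 + ε*(P*v^2) + c₁*θ ≤ 0 := by
    nlinarith [sq_nonneg v]
  have hC0 : -(ε*(c+1)*(v*F)) - B ≤ 0 := by
    have h5 : -(v*F) ≤ vb*F₀ := le_trans (neg_le_abs _) hvF
    have h6 : (0:ℝ) ≤ ε*(c+1) := by positivity
    have h7 : ε*(c+1)*(-(v*F)) ≤ ε*(c+1)*(vb*F₀) := mul_le_mul_of_nonneg_left h5 h6
    rw [hB]
    nlinarith
  have hnum : (-(c) * v^2 - ε*F^2 + ε*(P*v^2) + c₁*θ) * r + (-(ε*(c+1)*(v*F)) - B) ≤ 0 := by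
    have := mul_nonpos_of_nonpos_of_nonneg hA0 h0r.le
    linarith
  exact div_nonpos_of_nonpos_of_nonneg hnum hr2.le

set_option maxHeartbeats 2000000 in
/-- Every positive global `C²` solution of `h'' + ((N-1)/r) h' = (1/α) h^(-α) - p` on
`(0,∞)` converges to `ξ = (αp)^(-1/α)` as `r → ∞`. -/
theorem tendsto_xi_at_infinity
    (N : ℕ) (hN : 2 ≤ N) (α p : ℝ) (hα : 1 < α) (hp : 0 < p)
    (ξ : ℝ) (hξ : ξ = (α * p) ^ (-(1 / α)))
    (h : ℝ → ℝ)
    (hpos : ∀ r ∈ Ioi (0 : ℝ), 0 < h r)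
    (hreg : ContDiffOn ℝ 2 h (Ioi 0))
    (hode : ∀ r ∈ Ioi (0 : ℝ),
      deriv (deriv h) r + ((N : ℝ) - 1) / r * deriv h r = 1 / α * h r ^ (-α) - p) :
    Tendsto h atTop (nhds ξ) := by
  have hα0 : (0:ℝ) < α := lt_trans one_pos hα
  have hαne : α - (1:ℝ) ≠ 0 := ne_of_gt (by linarith)
  have hαp : (0:ℝ) < α * p := mul_pos hα0 hp
  have hξ0 : 0 < ξ := hξ ▸ Real.rpow_pos_of_pos hαp _
  have hξα : ξ ^ (-α) = α * p := by
    rw [hξ, ← Real.rpow_mul hαp.le,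
      show (-(1/α)) * (-α) = 1 by field_simp, Real.rpow_one]
  obtain ⟨c, hcdef⟩ : ∃ x : ℝ, x = (N:ℝ) - 1 := ⟨_, rfl⟩
  have hc : 1 ≤ c := by
    have : (2:ℝ) ≤ (N:ℝ) := by exact_mod_cast hN
    rw [hcdef]; linarith
  have hc0 : 0 < c := lt_of_lt_of_le one_pos hc
  -- differentiability
  have hdiff : ∀ r ∈ Ioi (0:ℝ), HasDerivAt h (deriv h r) r := by
    intro r hr
    exact ((hreg.differentiableOn (by norm_num)).differentiableAt
      (isOpen_Ioi.mem_nhds hr)).hasDerivAt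
  have hreg1 : ContDiffOn ℝ 1 (deriv h) (Ioi 0) :=
    hreg.deriv_of_isOpen isOpen_Ioi (by norm_num)
  have hdiff2 : ∀ r ∈ Ioi (0:ℝ), HasDerivAt (deriv h) (deriv (deriv h) r) r := by
    intro r hr
    exact ((hreg1.differentiableOn (by norm_num)).differentiableAt
      (isOpen_Ioi.mem_nhds hr)).hasDerivAt
  have hErfl : ∀ r, EXi α p h r = deriv h r ^ 2 / 2 + fVXi α p (h r) := fun r => rfl
  have hw : ∀ r ∈ Ioi (0:ℝ),
      deriv (deriv h) r = -(ffXi α p (h r)) - c/r * deriv h r := by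
    intro r hr
    have hodr := hode r hr
    rw [hcdef]
    unfold ffXi
    linear_combination hodr
  have HE : ∀ r ∈ Ioi (0:ℝ), HasDerivAt (EXi α p h) (-(c/r) * (deriv h r)^2) r := by
    intro r hr
    have ha := hpos r hr
    have H1 : HasDerivAt (fun s => (deriv h s)^2/2)
        (deriv h r * deriv (deriv h) r) r := by
      have H := ((hdiff2 r hr).mul (hdiff2 r hr)).div_const 2
      simp only [pow_two]
      refine H.congr_deriv ?_
      ring
    have H2 : HasDerivAt (fun s => fVXi α p (h s)) (ffXi α p (h r) * deriv h r) r :=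
      (hasDerivAt_fVXi hα ha).comp r (hdiff r hr)
    have H3 := H1.add H2
    have : HasDerivAt (fun s => (deriv h s)^2/2 + fVXi α p (h s))
        (-(c/r) * (deriv h r)^2) r := by
      refine H3.congr_deriv ?_
      rw [hw r hr]
      ring
    exact this
  have hEanti : AntitoneOn (EXi α p h) (Ici 1) := by
    apply antitoneOn_of_deriv_nonpos (convex_Ici 1)
    · exact fun r hr => (HE r (mem_Ioi.2 (lt_of_lt_of_le one_pos hr))).continuousAt.continuousWithinAt
    · intro r hr
      rw [interior_Ici] at hr
      exact (HE r (mem_Ioi.2 (lt_trans one_pos hr))).differentiableAt.differentiableWithinAt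
    · intro r hr
      rw [interior_Ici] at hr
      have h0r : (0:ℝ) < r := lt_trans one_pos hr
      rw [(HE r h0r).deriv]
      have h1 : (0:ℝ) ≤ c/r := div_nonneg hc0.le h0r.le
      nlinarith [sq_nonneg (deriv h r)]
  obtain ⟨E₀, hE0def⟩ : ∃ x : ℝ, x = EXi α p h 1 := ⟨_, rfl⟩
  have h1mem : (1:ℝ) ∈ Ioi (0:ℝ) := by norm_num
  have hE0 : 0 < E₀ := by
    have h1 := fVXi_pos hα hp (hpos 1 h1mem)
    rw [hE0def, hErfl]
    nlinarith [sq_nonneg (deriv h 1)]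
  obtain ⟨M, hMdef⟩ : ∃ x : ℝ, x = E₀ / p := ⟨_, rfl⟩
  obtain ⟨m, hmdef⟩ : ∃ x : ℝ, x = (α*(α-1)*E₀) ^ (-(1/(α-1)) : ℝ) := ⟨_, rfl⟩
  have hX0 : (0:ℝ) < α*(α-1)*E₀ := by
    have h1 : (0:ℝ) < α - 1 := by linarith
    positivity
  have hm0 : 0 < m := hmdef ▸ Real.rpow_pos_of_pos hX0 _
  have hm1α : m ^ (1-α) = α*(α-1)*E₀ := by
    rw [hmdef, ← Real.rpow_mul hX0.le,
      show (-(1/(α-1))) * (1-α) = 1 by field_simp; ring, Real.rpow_one]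
  have hbound : ∀ r, 1 ≤ r → (h r ∈ Icc m M ∧ (deriv h r)^2 ≤ 2*E₀) := by
    intro r hr1
    have h0r : (0:ℝ) < r := lt_of_lt_of_le one_pos hr1
    have hEr : EXi α p h r ≤ E₀ := hE0def ▸ hEanti self_mem_Ici (mem_Ici.2 hr1) hr1
    have ha : 0 < h r := hpos r h0r
    rw [hErfl] at hEr
    have hV : fVXi α p (h r) ≤ E₀ := by nlinarith [sq_nonneg (deriv h r)]
    have hVrfl : fVXi α p (h r) = p * h r + (h r) ^ (1-α) / (α * (α - 1)) := rfl
    have hα1 : (0:ℝ) < α * (α - 1) := by nlinarith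
    have hrp : 0 < (h r) ^ (1-α) := Real.rpow_pos_of_pos ha _
    refine ⟨⟨?_, ?_⟩, ?_⟩
    · by_contra hcon
      push_neg at hcon
      have h1 : (h r) ^ (1-α) ≤ α*(α-1)*E₀ := by
        have hph : 0 < p * h r := mul_pos hp ha
        have h2 : (h r) ^ (1-α) / (α * (α - 1)) ≤ E₀ := by
          rw [hVrfl] at hV; linarith
        calc (h r) ^ (1-α) = (h r) ^ (1-α) / (α * (α - 1)) * (α * (α - 1)) := by
              field_simp
          _ ≤ E₀ * (α * (α - 1)) := mul_le_mul_of_nonneg_right h2 hα1.le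
          _ = α*(α-1)*E₀ := by ring
      have h2 : m ^ (1-α) < (h r) ^ (1-α) :=
        Real.rpow_lt_rpow_of_neg ha hcon (by linarith)
      rw [hm1α] at h2
      linarith
    · have hph : p * h r ≤ E₀ := by
        have h2 : 0 < (h r) ^ (1-α) / (α * (α - 1)) := div_pos hrp hα1
        rw [hVrfl] at hV; linarith
      rw [hMdef, le_div_iff₀ hp]
      linarith [mul_comm p (h r)]
    · have h1 := fVXi_pos hα hp ha
      linarith
  -- key step : energy gets below V(ξ) + 2δ
  have key : ∀ δ > (0:ℝ), ∃ r₀, 1 ≤ r₀ ∧ EXi α p h r₀ < fVXi α p ξ + 2*δ := by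
    intro δ hδ
    by_contra hcon
    push_neg at hcon
    -- constants
    obtain ⟨K, hKdef⟩ : ∃ x : ℝ, x = m ^ (-α-1) := ⟨_, rfl⟩
    have hK0 : 0 < K := hKdef ▸ Real.rpow_pos_of_pos hm0 _
    obtain ⟨ε, hεdef⟩ : ∃ x : ℝ, x = c/(2*K) := ⟨_, rfl⟩
    have hε0 : 0 < ε := hεdef ▸ div_pos hc0 (by linarith)
    have hεK : ε * K = c/2 := by
      rw [hεdef]
      field_simp
    obtain ⟨F₀, hFdef⟩ : ∃ x : ℝ, x = p + m^(-α)/α := ⟨_, rfl⟩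
    have hQ0 : 0 < m^(-α) := Real.rpow_pos_of_pos hm0 _
    have hF00 : 0 < F₀ := by rw [hFdef]; positivity
    obtain ⟨vb, hvbdef⟩ : ∃ x : ℝ, x = Real.sqrt (2*E₀) := ⟨_, rfl⟩
    have hvb0 : 0 ≤ vb := hvbdef ▸ Real.sqrt_nonneg _
    obtain ⟨B, hBdef⟩ : ∃ x : ℝ, x = ε*(c+1)*vb*F₀ := ⟨_, rfl⟩
    have hB0 : 0 ≤ B := by rw [hBdef]; positivity
    -- pointwise bounds
    have hFb : ∀ r, 1 ≤ r → |ffXi α p (h r)| ≤ F₀ := by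
      intro r hr1
      have ham := ((hbound r hr1).1).1
      have ha : 0 < h r := lt_of_lt_of_le hm0 ham
      have h1 : (h r)^(-α) ≤ m^(-α) :=
        Real.rpow_le_rpow_of_nonpos hm0 ham (by linarith)
      have h2 : 0 < (h r)^(-α) := Real.rpow_pos_of_pos ha _
      have hrfl : ffXi α p (h r) = p - (h r)^(-α)/α := rfl
      have h3 : (h r)^(-α)/α ≤ m^(-α)/α := div_le_div_of_nonneg_right h1 hα0.le
      have h4 : 0 < (h r)^(-α)/α := div_pos h2 hα0
      rw [hrfl, hFdef, abs_le]
      constructor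
      · linarith
      · linarith
    have hvabs : ∀ r, 1 ≤ r → |deriv h r| ≤ vb := by
      intro r hr1
      have h1 := (hbound r hr1).2
      rw [hvbdef, ← Real.sqrt_sq_eq_abs]
      exact Real.sqrt_le_sqrt h1
    -- the compact minimum κ
    have hVcont : ContinuousOn (fVXi α p) (Icc m M) := fun x hx =>
      (hasDerivAt_fVXi hα (lt_of_lt_of_le hm0 hx.1)).continuousAt.continuousWithinAt
    obtain ⟨A, hAdef⟩ : ∃ A : Set ℝ,
        A = Icc m M ∩ (fVXi α p) ⁻¹' (Ici (fVXi α p ξ + δ)) := ⟨_, rfl⟩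
    have hAcl : IsClosed A := by
      rw [hAdef]
      exact hVcont.preimage_isClosed_of_isClosed isClosed_Icc isClosed_Ici
    have hAcomp : IsCompact A := isCompact_Icc.of_isClosed_subset hAcl
      (by rw [hAdef]; exact inter_subset_left)
    obtain ⟨κ, hκ0, hκ⟩ := pos_min_on_compact (g := fun x => (ffXi α p x)^2) hAcomp
      (by
        intro x hx
        have hx0 : 0 < x := lt_of_lt_of_le hm0 ((hAdef ▸ hx).1.1)
        exact (((hasDerivAt_ffXi hα hx0).continuousAt).pow 2).continuousWithinAt)
      (by
        intro x hx
        show 0 < (ffXi α p x)^2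
        have hxA := hAdef ▸ hx
        have hx0 : 0 < x := lt_of_lt_of_le hm0 hxA.1.1
        have hne : x ≠ ξ := by
          intro hh
          have h2 := hxA.2
          rw [hh] at h2
          simp only [mem_preimage, mem_Ici] at h2
          linarith
        exact lt_of_le_of_ne (sq_nonneg _)
          (Ne.symm (pow_ne_zero 2 (ffXi_ne_zero hα hξ0 hξα hx0 hne))))
    obtain ⟨θ, hθdef⟩ : ∃ x : ℝ, x = min δ κ := ⟨_, rfl⟩
    have hθ0 : 0 < θ := hθdef ▸ lt_min hδ hκ0
    obtain ⟨c₁, hc₁def⟩ : ∃ x : ℝ, x = min (c/2) ε := ⟨_, rfl⟩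
    have hc₁0 : 0 < c₁ := hc₁def ▸ lt_min (by linarith) hε0
    have hc₁c : c₁ ≤ c/2 := hc₁def ▸ min_le_left _ _
    have hc₁ε : c₁ ≤ ε := hc₁def ▸ min_le_right _ _
    -- the lower bound on v² + f(h)²
    have hlow : ∀ r, 1 ≤ r → θ ≤ (deriv h r)^2 + (ffXi α p (h r))^2 := by
      intro r hr1
      rcases le_or_gt δ ((deriv h r)^2) with hd | hd
      · have h1 : θ ≤ δ := hθdef ▸ min_le_left _ _
        linarith [sq_nonneg (ffXi α p (h r))]
      · have hEc := hcon r hr1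
        rw [hErfl] at hEc
        have hVr : fVXi α p ξ + δ ≤ fVXi α p (h r) := by linarith
        have hmem := (hbound r hr1).1
        have hrA : h r ∈ A := by rw [hAdef]; exact ⟨hmem, hVr⟩
        have h2 := hκ _ hrA
        have h3 : θ ≤ κ := hθdef ▸ min_le_right _ _
        have h4 : κ ≤ (ffXi α p (h r))^2 := h2
        linarith [sq_nonneg (deriv h r)]
    -- the perturbed Lyapunov function U
    obtain ⟨U, hUdef⟩ : ∃ U : ℝ → ℝ, U = fun s =>
        EXi α p h s + ε * (deriv h s * ffXi α p (h s) * s⁻¹)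
          + c₁*θ*Real.log s + B * s⁻¹ := ⟨_, rfl⟩
    have HU : ∀ r, 1 ≤ r → ∃ d, HasDerivAt U d r ∧ d ≤ 0 := by
      intro r hr1
      have h0r : (0:ℝ) < r := lt_of_lt_of_le one_pos hr1
      have hrmem : r ∈ Ioi (0:ℝ) := h0r
      obtain ⟨⟨ham, haM⟩, hv2⟩ := hbound r hr1
      have ha : 0 < h r := lt_of_lt_of_le hm0 ham
      have G1 : HasDerivAt (fun s => deriv h s * ffXi α p (h s))
          (deriv (deriv h) r * ffXi α p (h r) + deriv h r * ((h r)^(-α-1) * deriv h r)) r :=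
        (hdiff2 r hrmem).mul ((hasDerivAt_ffXi hα ha).comp r (hdiff r hrmem))
      have G2 := G1.mul (hasDerivAt_inv h0r.ne')
      have G3 := (Real.hasDerivAt_log h0r.ne').const_mul (c₁*θ)
      have G4 := (hasDerivAt_inv h0r.ne').const_mul B
      have Hder := (((HE r hrmem).add (G2.const_mul ε)).add G3).add G4
      have hPK : (h r)^(-α-1) ≤ K := hKdef ▸
        Real.rpow_le_rpow_of_nonpos hm0 ham (by linarith)
      have e3 : |deriv h r * ffXi α p (h r)| ≤ vb*F₀ := by
        rw [abs_mul]
        exact mul_le_mul (hvabs r hr1) (hFb r hr1) (abs_nonneg _) hvb0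
      refine ⟨_, by rw [hUdef]; exact Hder, ?_⟩
      exact keyIneq c ε c₁ θ B K vb F₀ (deriv h r) (ffXi α p (h r)) ((h r)^(-α-1))
        (deriv (deriv h) r) r hr1 hc0 hε0 hεK hPK hc₁c hc₁ε hc₁0.le (hlow r hr1)
        e3 hBdef (hw r hrmem)
    -- U is antitone on [1, ∞)
    have hUanti : AntitoneOn U (Ici 1) := by
      apply antitoneOn_of_deriv_nonpos (convex_Ici 1)
      · intro r hr
        obtain ⟨d, hd, _⟩ := HU r hr
        exact hd.continuousAt.continuousWithinAt
      · intro r hr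
        rw [interior_Ici] at hr
        obtain ⟨d, hd, _⟩ := HU r hr.le
        exact hd.differentiableAt.differentiableWithinAt
      · intro r hr
        rw [interior_Ici] at hr
        obtain ⟨d, hd, hd0⟩ := HU r hr.le
        rw [hd.deriv]
        exact hd0
    -- contradiction : U decreasing but U → ∞
    have hθc₁ : 0 < c₁*θ := mul_pos hc₁0 hθ0
    obtain ⟨rs, hrsdef⟩ : ∃ x : ℝ, x = Real.exp (max 0 ((U 1 + ε*(vb*F₀) + 1)/(c₁*θ))) :=
      ⟨_, rfl⟩
    have hrs1 : (1:ℝ) ≤ rs := by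
      rw [hrsdef, ← Real.exp_zero]
      exact Real.exp_le_exp.2 (le_max_left _ _)
    have h0rs : (0:ℝ) < rs := lt_of_lt_of_le one_pos hrs1
    have hlog : (U 1 + ε*(vb*F₀) + 1)/(c₁*θ) ≤ Real.log rs := by
      rw [hrsdef, Real.log_exp]
      exact le_max_right _ _
    have hlog2 : U 1 + ε*(vb*F₀) + 1 ≤ c₁*θ*Real.log rs := by
      rw [div_le_iff₀ hθc₁] at hlog
      linarith [hlog]
    have hElb : 0 ≤ EXi α p h rs := by
      rw [hErfl]
      have h1 := fVXi_pos hα hp (hpos rs h0rs)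
      have h2 := sq_nonneg (deriv h rs)
      linarith
    have hterm : -(ε*(vb*F₀)) ≤ ε*(deriv h rs * ffXi α p (h rs) * rs⁻¹) := by
      have hinv1 : rs⁻¹ ≤ 1 := inv_le_one_of_one_le₀ hrs1
      have hinv0 : (0:ℝ) ≤ rs⁻¹ := inv_nonneg.2 h0rs.le
      have e3 : |deriv h rs * ffXi α p (h rs)| ≤ vb*F₀ := by
        rw [abs_mul]
        exact mul_le_mul (hvabs rs hrs1) (hFb rs hrs1) (abs_nonneg _) hvb0
      have h8 : |deriv h rs * ffXi α p (h rs) * rs⁻¹| ≤ vb*F₀ := by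
        rw [abs_mul, abs_of_nonneg hinv0]
        calc |deriv h rs * ffXi α p (h rs)| * rs⁻¹ ≤ (vb*F₀) * 1 :=
              mul_le_mul e3 hinv1 hinv0 (by positivity)
          _ = vb*F₀ := mul_one _
      have h9 : -(vb*F₀) ≤ deriv h rs * ffXi α p (h rs) * rs⁻¹ := by
        have := neg_abs_le (deriv h rs * ffXi α p (h rs) * rs⁻¹)
        linarith
      have h10 := mul_le_mul_of_nonneg_left h9 hε0.le
      linarith [h10]
    have hBrs : 0 ≤ B * rs⁻¹ := mul_nonneg hB0 (inv_nonneg.2 h0rs.le)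
    have hUrs : U rs = EXi α p h rs + ε * (deriv h rs * ffXi α p (h rs) * rs⁻¹)
        + c₁*θ*Real.log rs + B * rs⁻¹ := by rw [hUdef]
    have hfin := hUanti self_mem_Ici (mem_Ici.2 hrs1) hrs1
    rw [hUrs] at hfin
    linarith
  -- convergence of V ∘ h
  have hVlim : Tendsto (fun r => fVXi α p (h r)) atTop (nhds (fVXi α p ξ)) := by
    rw [Metric.tendsto_atTop]
    intro e he
    obtain ⟨r₀, hr₀1, hr₀⟩ := key (e/3) (by linarith)
    refine ⟨r₀, fun r hr => ?_⟩
    have hr1 : (1:ℝ) ≤ r := le_trans hr₀1 hr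
    have h0r : (0:ℝ) < r := lt_of_lt_of_le one_pos hr1
    have hEr : EXi α p h r ≤ EXi α p h r₀ := hEanti (mem_Ici.2 hr₀1) (mem_Ici.2 hr1) hr
    have ha := hpos r h0r
    have hge : fVXi α p ξ ≤ fVXi α p (h r) := by
      rcases eq_or_ne (h r) ξ with he' | hne
      · rw [he']
      · exact (fVXi_strict_min hα hξ0 hξα ha hne).le
    simp only [hErfl] at hEr hr₀
    have hle : fVXi α p (h r) ≤ deriv h r ^ 2 / 2 + fVXi α p (h r) := by
      nlinarith [sq_nonneg (deriv h r)]
    rw [Real.dist_eq, abs_lt]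
    constructor <;> linarith [hr₀, hEr, hle, hge]
  -- conclusion
  rw [Metric.tendsto_atTop]
  intro e he
  obtain ⟨S, hSdef⟩ : ∃ S : Set ℝ, S = Icc m M ∩ {x | e ≤ |x - ξ|} := ⟨_, rfl⟩
  have hScl : IsClosed S := by
    rw [hSdef]
    apply IsClosed.inter isClosed_Icc
    have h2 : {x : ℝ | e ≤ |x - ξ|} = (fun x => |x - ξ|) ⁻¹' Ici e := rfl
    rw [h2]
    exact IsClosed.preimage ((continuous_id.sub continuous_const).abs) isClosed_Ici
  have hSsub : S ⊆ Icc m M := by rw [hSdef]; exact inter_subset_left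
  have hScomp : IsCompact S := isCompact_Icc.of_isClosed_subset hScl hSsub
  obtain ⟨κ₂, hκ₂0, hκ₂⟩ := pos_min_on_compact (g := fun x => fVXi α p x - fVXi α p ξ)
    hScomp
    (fun x hx => (((hasDerivAt_fVXi hα (lt_of_lt_of_le hm0 (hSsub hx).1)).continuousAt.sub
      continuousAt_const).continuousWithinAt))
    (by
      intro x hx
      show 0 < fVXi α p x - fVXi α p ξ
      have hx0 : 0 < x := lt_of_lt_of_le hm0 (hSsub hx).1
      have hxS := hSdef ▸ hx
      have hne : x ≠ ξ := by
        intro hh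
        have := hxS.2
        rw [hh] at this
        simp only [mem_setOf_eq, sub_self, abs_zero] at this
        linarith
      linarith [fVXi_strict_min hα hξ0 hξα hx0 hne])
  obtain ⟨R, hR⟩ := Metric.tendsto_atTop.1 hVlim κ₂ hκ₂0
  refine ⟨max R 1, fun r hr => ?_⟩
  have hr1 : (1:ℝ) ≤ r := le_trans (le_max_right _ _) hr
  have hrR : R ≤ r := le_trans (le_max_left _ _) hr
  have hmem := (hbound r hr1).1
  have hd := hR r hrR
  rw [Real.dist_eq] at hd
  rw [Real.dist_eq]
  by_contra hcon2
  push_neg at hcon2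
  have hrS : h r ∈ S := by rw [hSdef]; exact ⟨hmem, hcon2⟩
  have h3 := hκ₂ _ hrS
  have habs : fVXi α p (h r) - fVXi α p ξ ≤ |fVXi α p (h r) - fVXi α p ξ| := le_abs_self _
  linarith
end
end

section
/- Let N ≥ 2, α > 1, p > 0 and ξ = (αp)^{-1/α}. Let h be a positive C² function on (0,∞) satisfying h'' + ((N-1)/r)h' = (1/α)h^{-α} − p on (0,∞), with h not identically equal to ξ, and let r_1 < r_2 < r_3 < ⋯ be the increasing enumeration of its critical points. Then lim_{k→∞} ( r_{k+1} − r_k ) = π (αp)^{-(1+α)/(2α)}. -/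
open Set Filter

noncomputable section

/-- Bundled hypotheses of the main theorem. -/
structure Sol where
  N : ℕ
  hN : 2 ≤ N
  α : ℝ
  p : ℝ
  hα : 1 < α
  hp : 0 < p
  ξ : ℝ
  hξ : ξ = (α * p) ^ (-(1 / α))
  h : ℝ → ℝ
  hpos : ∀ r ∈ Ioi (0:ℝ), 0 < h r
  hreg : ContDiffOn ℝ 2 h (Ioi 0)
  hode : ∀ r ∈ Ioi (0:ℝ),
    deriv (deriv h) r + ((N:ℝ)-1)/r * deriv h r = 1/α * h r ^ (-α) - p
  hnontriv : ¬ ∀ r ∈ Ioi (0:ℝ), h r = ξ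
  rk : ℕ → ℝ
  hmono : StrictMono rk
  hrkpos : ∀ k, 0 < rk k
  hrange : {r : ℝ | 0 < r ∧ deriv h r = 0} = Set.range rk

namespace Sol

variable (S : Sol)


/-- first derivative -/
def h1 : ℝ → ℝ := deriv S.h
/-- second derivative -/
def h2 : ℝ → ℝ := deriv (deriv S.h)

lemma hα0 : (0:ℝ) < S.α := lt_trans one_pos S.hα

lemma hαp : (0:ℝ) < S.α * S.p := mul_pos S.hα0 S.hp

lemma hξpos : 0 < S.ξ := S.hξ ▸ Real.rpow_pos_of_pos S.hαp _

lemma hξpow : S.ξ ^ (-S.α) = S.α * S.p := by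
  rw [S.hξ, ← Real.rpow_mul (le_of_lt S.hαp)]
  rw [show -(1/S.α) * -S.α = 1 by field_simp [ne_of_gt S.hα0], Real.rpow_one]

lemma hode' : ∀ r ∈ Ioi (0:ℝ),
    S.h2 r + ((S.N:ℝ)-1)/r * S.h1 r = 1/S.α * S.h r ^ (-S.α) - S.p := S.hode

lemma diffOn_h : DifferentiableOn ℝ S.h (Ioi 0) :=
  S.hreg.differentiableOn (by norm_num)

lemma hasDerivAt_h : ∀ r ∈ Ioi (0:ℝ), HasDerivAt S.h (S.h1 r) r := by
  intro r hr
  exact (S.diffOn_h.differentiableAt (isOpen_Ioi.mem_nhds hr)).hasDerivAt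

lemma contDiffOn_h1 : ContDiffOn ℝ 1 S.h1 (Ioi 0) :=
  S.hreg.deriv_of_isOpen isOpen_Ioi (by norm_num)

lemma contOn_h1 : ContinuousOn S.h1 (Ioi 0) := S.contDiffOn_h1.continuousOn

lemma hasDerivAt_h1 : ∀ r ∈ Ioi (0:ℝ), HasDerivAt S.h1 (S.h2 r) r := by
  intro r hr
  exact ((S.contDiffOn_h1.differentiableOn (by norm_num)).differentiableAt
    (isOpen_Ioi.mem_nhds hr)).hasDerivAt

lemma contOn_h2 : ContinuousOn S.h2 (Ioi 0) :=
  (S.contDiffOn_h1.deriv_of_isOpen (m := 0) isOpen_Ioi (by norm_num)).continuousOn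

lemma contOn_h : ContinuousOn S.h (Ioi 0) := S.hreg.continuousOn

lemma h2_eq : ∀ r ∈ Ioi (0:ℝ),
    S.h2 r = 1/S.α * S.h r ^ (-S.α) - S.p - ((S.N:ℝ)-1)/r * S.h1 r := by
  intro r hr
  have := S.hode' r hr
  linarith

lemma rk_crit (k : ℕ) : S.h1 (S.rk k) = 0 := by
  have : S.rk k ∈ {r : ℝ | 0 < r ∧ deriv S.h r = 0} := by
    rw [S.hrange]; exact mem_range_self k
  exact this.2

lemma crit_is_rk {r : ℝ} (hr : 0 < r) (hz : S.h1 r = 0) : ∃ k, S.rk k = r := by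
  have : r ∈ {r : ℝ | 0 < r ∧ deriv S.h r = 0} := ⟨hr, hz⟩
  rw [S.hrange] at this
  exact this

lemma hasDerivAt_h2 : ∀ r ∈ Ioi (0:ℝ), HasDerivAt S.h2
    (-(S.h r ^ (-S.α-1)) * S.h1 r + ((S.N:ℝ)-1)/r^2 * S.h1 r - ((S.N:ℝ)-1)/r * S.h2 r) r := by
  intro r hr
  have hr0 : (0:ℝ) < r := hr
  have d1 : HasDerivAt (fun t => 1/S.α * S.h t ^ (-S.α) - S.p)
      (-(S.h r ^ (-S.α-1)) * S.h1 r) r := by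
    have := ((S.hasDerivAt_h r hr).rpow_const
      (p := -S.α) (Or.inl (ne_of_gt (S.hpos r hr)))).const_mul (1/S.α)
    have hα0 := S.hα0
    refine (this.sub_const S.p).congr_deriv (Eq.symm ?_)
    field_simp
  have d2 : HasDerivAt (fun t : ℝ => ((S.N:ℝ)-1)/t * S.h1 t)
      (-(((S.N:ℝ)-1)/r^2) * S.h1 r + ((S.N:ℝ)-1)/r * S.h2 r) r := by
    have dinv : HasDerivAt (fun t : ℝ => ((S.N:ℝ)-1)/t) (-(((S.N:ℝ)-1)/r^2)) r := by
      simpa [div_eq_mul_inv, mul_comm, neg_div] using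
        ((hasDerivAt_inv (ne_of_gt hr0)).const_mul ((S.N:ℝ)-1))
    exact dinv.mul (S.hasDerivAt_h1 r hr)
  have dF : HasDerivAt (fun t => 1/S.α * S.h t ^ (-S.α) - S.p - ((S.N:ℝ)-1)/t * S.h1 t)
      (-(S.h r ^ (-S.α-1)) * S.h1 r + ((S.N:ℝ)-1)/r^2 * S.h1 r - ((S.N:ℝ)-1)/r * S.h2 r) r := by
    refine (d1.sub d2).congr_deriv (Eq.symm ?_)
    ring
  apply dF.congr_of_eventuallyEq
  exact Filter.eventuallyEq_of_mem (isOpen_Ioi.mem_nhds hr) (fun t ht => S.h2_eq t ht)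

end Sol

/-- Lipschitz estimate for the vector field of the ODE on a compact box,
uniform in the damping coefficient `c ∈ [0, Bc]`. -/
lemma ode_lipschitz (α p m M B Bc : ℝ) (hα : 1 < α) (hm : 0 < m) (hB : 0 ≤ B)
    (hBc : 0 ≤ Bc) :
    ∃ K : NNReal, ∀ c ∈ Icc (0:ℝ) Bc,
      LipschitzOnWith K (fun x : ℝ × ℝ => (x.2, 1/α * x.1 ^ (-α) - p - c * x.2))
        (Icc m M ×ˢ Icc (-B) B) := by
  have hα0 : (0:ℝ) < α := lt_trans one_pos hα
  set Lg : ℝ := m ^ (-α-1) with hLg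
  have hLg0 : 0 ≤ Lg := (Real.rpow_pos_of_pos hm _).le
  refine ⟨(Lg + Bc + 1).toNNReal, fun c hc => ?_⟩
  rw [lipschitzOnWith_iff_dist_le_mul]
  intro x hx y hy
  have key : ∀ u ∈ Icc m M, ∀ v ∈ Icc m M,
      |1/α * u ^ (-α) - 1/α * v ^ (-α)| ≤ Lg * |u - v| := by
    intro u hu v hv
    have := Convex.norm_image_sub_le_of_norm_hasDerivWithin_le
      (f := fun u : ℝ => 1/α * u ^ (-α)) (f' := fun u : ℝ => -(u ^ (-α-1)))
      (s := Icc m M) (C := Lg) ?_ ?_ (convex_Icc m M) hv hu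
    · simpa [Real.norm_eq_abs] using this
    · intro z hz
      have hz0 : (0:ℝ) < z := lt_of_lt_of_le hm hz.1
      have := ((Real.hasDerivAt_rpow_const (x := z) (p := -α)
        (Or.inl (ne_of_gt hz0))).const_mul (1/α)).hasDerivWithinAt (s := Icc m M)
      convert this using 1
      field_simp
    · intro z hz
      have hz0 : (0:ℝ) < z := lt_of_lt_of_le hm hz.1
      have : z ^ (-α-1) ≤ m ^ (-α-1) :=
        Real.rpow_le_rpow_of_nonpos hm hz.1 (by linarith)
      simpa [Real.norm_eq_abs, abs_of_pos (Real.rpow_pos_of_pos hz0 (-α-1))] using this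
  have hd : dist x y = max (dist x.1 y.1) (dist x.2 y.2) := Prod.dist_eq
  rw [Prod.dist_eq]
  have h1d : dist x.2 y.2 ≤ dist x y := by rw [hd]; exact le_max_right _ _
  have h1d' : dist x.1 y.1 ≤ dist x y := by rw [hd]; exact le_max_left _ _
  have hdist0 : (0:ℝ) ≤ dist x y := dist_nonneg
  have hcoef : ((Lg + Bc + 1).toNNReal : ℝ) = Lg + Bc + 1 :=
    Real.coe_toNNReal _ (by linarith)
  rw [hcoef]
  apply max_le
  · calc dist x.2 y.2 ≤ dist x y := h1d
      _ ≤ (Lg + Bc + 1) * dist x y := by nlinarith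
  · rw [Real.dist_eq]
    have e1 : (1/α * x.1 ^ (-α) - p - c * x.2) - (1/α * y.1 ^ (-α) - p - c * y.2)
        = (1/α * x.1 ^ (-α) - 1/α * y.1 ^ (-α)) - c * (x.2 - y.2) := by ring
    rw [e1]
    have b1 := key x.1 hx.1 y.1 hy.1
    have b2 : |c * (x.2 - y.2)| ≤ Bc * dist x y := by
      rw [abs_mul]
      have : |x.2 - y.2| = dist x.2 y.2 := (Real.dist_eq _ _).symm
      rw [this, abs_of_nonneg hc.1]
      exact mul_le_mul hc.2 h1d dist_nonneg hBc
    have b1' : |1/α * x.1 ^ (-α) - 1/α * y.1 ^ (-α)| ≤ Lg * dist x y := by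
      refine le_trans b1 ?_
      have : |x.1 - y.1| = dist x.1 y.1 := (Real.dist_eq _ _).symm
      rw [this]
      exact mul_le_mul_of_nonneg_left h1d' hLg0
    calc |(1/α * x.1 ^ (-α) - 1/α * y.1 ^ (-α)) - c * (x.2 - y.2)|
        ≤ |1/α * x.1 ^ (-α) - 1/α * y.1 ^ (-α)| + |c * (x.2 - y.2)| := abs_sub _ _
      _ ≤ Lg * dist x y + Bc * dist x y := add_le_add b1' b2
      _ ≤ (Lg + Bc + 1) * dist x y := by nlinarith

namespace Sol

variable (S : Sol)

lemma xi_equilibrium : 1/S.α * S.ξ ^ (-S.α) - S.p = 0 := by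
  rw [S.hξpow]
  field_simp [ne_of_gt S.hα0]
  ring

lemma hN1 : (1:ℝ) ≤ (S.N:ℝ) - 1 := by
  have : (2:ℝ) ≤ (S.N:ℝ) := by exact_mod_cast S.hN
  linarith

/-- The key uniqueness statement: a critical point with value `ξ` forces `h ≡ ξ`. -/
lemma uniqueness : ∀ r₀ ∈ Ioi (0:ℝ), S.h r₀ = S.ξ → S.h1 r₀ = 0 → False := by
  intro r₀ hr₀ hval hder
  have hnt := S.hnontriv
  push_neg at hnt
  obtain ⟨z, hz, hzne⟩ := hnt
  set a : ℝ := min z r₀ / 2 with ha_def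
  set b : ℝ := max z r₀ + 1 with hb_def
  have hz0 : (0:ℝ) < z := hz
  have hr₀0 : (0:ℝ) < r₀ := hr₀
  have ha0 : 0 < a := by
    have := lt_min hz0 hr₀0
    simp only [ha_def]; linarith
  have har₀ : a < r₀ := by
    have h1 : min z r₀ ≤ r₀ := min_le_right _ _
    simp only [ha_def]; linarith
  have hbr₀ : r₀ < b := by
    have h1 : r₀ ≤ max z r₀ := le_max_right _ _
    simp only [hb_def]; linarith
  have haz : a < z := by
    have h1 : min z r₀ ≤ z := min_le_left _ _
    simp only [ha_def]; linarith
  have hzb : z ≤ b := by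
    have h1 : z ≤ max z r₀ := le_max_left _ _
    simp only [hb_def]; linarith
  have hsub : Icc a b ⊆ Ioi 0 := fun t ht => lt_of_lt_of_le ha0 ht.1
  have hKc : IsCompact (Icc a b) := isCompact_Icc
  have hne : (Icc a b).Nonempty := ⟨r₀, ⟨le_of_lt har₀, le_of_lt hbr₀⟩⟩
  have hch : ContinuousOn S.h (Icc a b) := S.contOn_h.mono hsub
  have hch1 : ContinuousOn S.h1 (Icc a b) := S.contOn_h1.mono hsub
  obtain ⟨tm, htm, hmin⟩ := hKc.exists_isMinOn hne hch
  obtain ⟨tM, htM, hmax⟩ := hKc.exists_isMaxOn hne hch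
  obtain ⟨tB, htB, hmaxB⟩ := hKc.exists_isMaxOn hne hch1.abs
  set m : ℝ := min (S.h tm) S.ξ with hm_def
  set M : ℝ := max (S.h tM) S.ξ with hM_def
  set B : ℝ := max |S.h1 tB| 1 with hB_def
  have hm0 : 0 < m := lt_min (S.hpos tm (hsub htm)) S.hξpos
  have hB1 : (1:ℝ) ≤ B := le_max_right _ _
  set Bc : ℝ := ((S.N:ℝ)-1)/a with hBc_def
  have hBc0 : 0 ≤ Bc := div_nonneg (by linarith [S.hN1]) ha0.le
  obtain ⟨K, hK⟩ := ode_lipschitz S.α S.p m M B Bc S.hα hm0 (by linarith) hBc0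
  set v : ℝ → ℝ × ℝ → ℝ × ℝ := fun t x =>
    (x.2, 1/S.α * x.1 ^ (-S.α) - S.p - (((S.N:ℝ)-1)/(max a (min t b))) * x.2) with hv_def
  set sbox : ℝ → Set (ℝ × ℝ) := fun _ => Icc m M ×ˢ Icc (-B) B with hsbox_def
  have hv : ∀ t, LipschitzOnWith K (v t) (sbox t) := by
    intro t
    apply hK
    constructor
    · apply div_nonneg (by linarith [S.hN1])
      exact le_trans ha0.le (le_max_left _ _)
    · rw [hBc_def]
      gcongr
      · linarith [S.hN1]
      · exact le_max_left _ _
  set f : ℝ → ℝ × ℝ := fun t => (S.h t, S.h1 t) with hf_def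
  set g : ℝ → ℝ × ℝ := fun _ => (S.ξ, (0:ℝ)) with hg_def
  have heqn : EqOn f g (Icc a b) := by
    apply ODE_solution_unique_of_mem_Icc (fun t _ => hv t) (t₀ := r₀) ⟨har₀, hbr₀⟩
    · exact hch.prodMk hch1
    · intro t ht
      have htI : t ∈ Ioi (0:ℝ) := lt_trans ha0 ht.1
      have hclamp : max a (min t b) = t := by
        rw [min_eq_left (le_of_lt ht.2), max_eq_right (le_of_lt ht.1)]
      have hd := (S.hasDerivAt_h t htI).prodMk (S.hasDerivAt_h1 t htI)
      have : v t (f t) = (S.h1 t, S.h2 t) := by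
        simp only [hv_def, hf_def, hclamp]
        rw [← S.h2_eq t htI]
      rw [this]
      exact hd
    · intro t ht
      have ht' := Ioo_subset_Icc_self ht
      refine ⟨⟨le_trans (min_le_left _ _) (hmin ht'), le_trans (hmax ht') (le_max_left _ _)⟩, ?_⟩
      have : |S.h1 t| ≤ B := le_trans (hmaxB ht') (le_max_left _ _)
      rw [abs_le] at this
      exact this
    · exact continuousOn_const
    · intro t ht
      have : v t (g t) = (0, 0) := by
        simp only [hv_def, hg_def, mul_zero, sub_zero]
        rw [S.xi_equilibrium]
      rw [this]
      exact hasDerivAt_const t _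
    · intro t ht
      refine ⟨⟨min_le_right _ _, le_max_right _ _⟩, ?_⟩
      show (0:ℝ) ∈ Icc (-B) B
      constructor
      · linarith
      · linarith
    · exact Prod.ext hval hder
  have := heqn ⟨le_of_lt haz, hzb⟩
  simp only [hf_def, hg_def, Prod.mk.injEq] at this
  exact hzne this.1

lemma crit_ne (r : ℝ) (hr : r ∈ Ioi (0:ℝ)) (hz : S.h1 r = 0) : S.h r ≠ S.ξ :=
  fun hval => S.uniqueness r hr hval hz

lemma h2_crit (r : ℝ) (hr : r ∈ Ioi (0:ℝ)) (hz : S.h1 r = 0) :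
    S.h2 r = 1/S.α * S.h r ^ (-S.α) - S.p := by
  have := S.h2_eq r hr
  rw [hz] at this
  simpa using this

lemma h2_crit_pos (r : ℝ) (hr : r ∈ Ioi (0:ℝ)) (hz : S.h1 r = 0)
    (hlt : S.h r < S.ξ) : 0 < S.h2 r := by
  rw [S.h2_crit r hr hz]
  have h1 : S.ξ ^ (-S.α) < S.h r ^ (-S.α) :=
    Real.rpow_lt_rpow_of_neg (S.hpos r hr) hlt (by linarith [S.hα0])
  rw [S.hξpow] at h1
  have hα0 := S.hα0
  have : S.p < 1/S.α * S.h r ^ (-S.α) := by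
    rw [show S.p = 1/S.α * (S.α * S.p) by field_simp]
    apply mul_lt_mul_of_pos_left h1
    positivity
  linarith

lemma h2_crit_neg (r : ℝ) (hr : r ∈ Ioi (0:ℝ)) (hz : S.h1 r = 0)
    (hgt : S.ξ < S.h r) : S.h2 r < 0 := by
  rw [S.h2_crit r hr hz]
  have h1 : S.h r ^ (-S.α) < S.ξ ^ (-S.α) :=
    Real.rpow_lt_rpow_of_neg S.hξpos hgt (by linarith [S.hα0])
  rw [S.hξpow] at h1
  have hα0 := S.hα0
  have : 1/S.α * S.h r ^ (-S.α) < S.p := by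
    rw [show S.p = 1/S.α * (S.α * S.p) by field_simp]
    apply mul_lt_mul_of_pos_left h1
    positivity
  linarith

lemma h2_crit_ne (r : ℝ) (hr : r ∈ Ioi (0:ℝ)) (hz : S.h1 r = 0) : S.h2 r ≠ 0 := by
  rcases lt_trichotomy (S.h r) S.ξ with hc | hc | hc
  · exact ne_of_gt (S.h2_crit_pos r hr hz hc)
  · exact absurd hc (S.crit_ne r hr hz)
  · exact ne_of_lt (S.h2_crit_neg r hr hz hc)

lemma rk_tendsto : Tendsto S.rk atTop atTop := by
  by_contra hbd
  have hbdd : BddAbove (Set.range S.rk) := by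
    by_contra hb
    exact hbd (tendsto_atTop_atTop_of_monotone' S.hmono.monotone hb)
  set rs : ℝ := ⨆ k, S.rk k with hrs_def
  have hlim : Tendsto S.rk atTop (nhds rs) := tendsto_atTop_ciSup S.hmono.monotone hbdd
  have hrs_mem : rs ∈ Ioi (0:ℝ) := lt_of_lt_of_le (S.hrkpos 0) (le_ciSup hbdd 0)
  have hlt : ∀ k, S.rk k < rs :=
    fun k => lt_of_lt_of_le (S.hmono (Nat.lt_succ_self k)) (le_ciSup hbdd (k+1))
  have hz1 : S.h1 rs = 0 := by
    have hcont : ContinuousAt S.h1 rs :=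
      S.contOn_h1.continuousAt (isOpen_Ioi.mem_nhds hrs_mem)
    have h1 : Tendsto (fun k => S.h1 (S.rk k)) atTop (nhds (S.h1 rs)) :=
      (hcont.tendsto).comp hlim
    have h2 : Tendsto (fun k => S.h1 (S.rk k)) atTop (nhds 0) := by
      simp only [S.rk_crit]
      exact tendsto_const_nhds
    exact tendsto_nhds_unique h1 h2
  have hz2 : S.h2 rs = 0 := by
    have hda := S.hasDerivAt_h1 rs hrs_mem
    rw [hasDerivAt_iff_tendsto_slope] at hda
    have hmem : Tendsto S.rk atTop (nhdsWithin rs {rs}ᶜ) := by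
      rw [tendsto_nhdsWithin_iff]
      exact ⟨hlim, Eventually.of_forall (fun k => ne_of_lt (hlt k))⟩
    have h1 : Tendsto (fun k => slope S.h1 rs (S.rk k)) atTop (nhds (S.h2 rs)) :=
      hda.comp hmem
    have h2 : (fun k => slope S.h1 rs (S.rk k)) = fun _ => (0:ℝ) := by
      funext k
      rw [slope_def_field, S.rk_crit, hz1]
      simp
    rw [h2] at h1
    exact tendsto_nhds_unique h1 tendsto_const_nhds
  have hval : S.h rs = S.ξ := by
    rcases lt_trichotomy (S.h rs) S.ξ with hc | hc | hc
    · exact absurd hz2 (ne_of_gt (S.h2_crit_pos rs hrs_mem hz1 hc))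
    · exact hc
    · exact absurd hz2 (ne_of_lt (S.h2_crit_neg rs hrs_mem hz1 hc))
  exact S.uniqueness rs hrs_mem hval hz1

/-- The potential. -/
def G (x : ℝ) : ℝ := S.p * x + (1/(S.α*(S.α-1))) * x ^ (1-S.α)

/-- The energy. -/
def E (r : ℝ) : ℝ := (1/2) * (S.h1 r)^2 + S.G (S.h r)

lemma hasDerivAt_G (x : ℝ) (hx : 0 < x) :
    HasDerivAt S.G (S.p - 1/S.α * x ^ (-S.α)) x := by
  have hα := S.hα
  have hα0 := S.hα0
  have d1 : HasDerivAt (fun y : ℝ => y ^ (1-S.α)) ((1-S.α) * x ^ (-S.α)) x := by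
    have := Real.hasDerivAt_rpow_const (x := x) (p := 1-S.α) (Or.inl (ne_of_gt hx))
    convert this using 2
    ring_nf
  have d2 : HasDerivAt (fun y : ℝ => S.p * y) S.p x := by
    simpa using (hasDerivAt_id x).const_mul S.p
  have d3 := d2.add (d1.const_mul (1/(S.α*(S.α-1))))
  refine (d3).congr_deriv (Eq.symm ?_)
  have hne : S.α - 1 ≠ 0 := ne_of_gt (by linarith)
  field_simp
  ring

lemma hasDerivAt_E : ∀ r ∈ Ioi (0:ℝ),
    HasDerivAt S.E (-(((S.N:ℝ)-1)/r) * (S.h1 r)^2) r := by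
  intro r hr
  have d1 : HasDerivAt (fun t => (1/2 : ℝ) * (S.h1 t)^2) (S.h1 r * S.h2 r) r := by
    have := ((S.hasDerivAt_h1 r hr).pow 2).const_mul (1/2 : ℝ)
    refine (this).congr_deriv (Eq.symm ?_)
    ring
  have d2 : HasDerivAt (fun t => S.G (S.h t))
      ((S.p - 1/S.α * S.h r ^ (-S.α)) * S.h1 r) r :=
    (S.hasDerivAt_G (S.h r) (S.hpos r hr)).comp r (S.hasDerivAt_h r hr)
  have := d1.add d2
  refine (this).congr_deriv (Eq.symm ?_)
  have he := S.h2_eq r hr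
  rw [he]
  ring

lemma contOn_E : ContinuousOn S.E (Ioi 0) :=
  fun r hr => (S.hasDerivAt_E r hr).continuousAt.continuousWithinAt

lemma E_anti : AntitoneOn S.E (Ioi 0) := by
  apply antitoneOn_of_deriv_nonpos (convex_Ioi 0) S.contOn_E
  · intro x hx
    rw [interior_Ioi] at hx
    exact (S.hasDerivAt_E x hx).differentiableAt.differentiableWithinAt
  · intro x hx
    rw [interior_Ioi] at hx
    rw [(S.hasDerivAt_E x hx).deriv]
    have hx0 : (0:ℝ) < x := hx
    have := sq_nonneg (S.h1 x)
    have hd : 0 ≤ ((S.N:ℝ)-1)/x := div_nonneg (by linarith [S.hN1]) hx0.le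
    nlinarith

lemma G_anti : StrictAntiOn S.G (Ioc 0 S.ξ) := by
  apply strictAntiOn_of_deriv_neg (convex_Ioc 0 S.ξ)
  · intro x hx
    exact (S.hasDerivAt_G x hx.1).continuousAt.continuousWithinAt
  · intro x hx
    rw [interior_Ioc] at hx
    rw [(S.hasDerivAt_G x hx.1).deriv]
    have h1 : S.ξ ^ (-S.α) < x ^ (-S.α) :=
      Real.rpow_lt_rpow_of_neg hx.1 hx.2 (by linarith [S.hα0])
    rw [S.hξpow] at h1
    have hα0 := S.hα0
    have : S.p < 1/S.α * x ^ (-S.α) := by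
      rw [show S.p = 1/S.α * (S.α * S.p) by field_simp]
      apply mul_lt_mul_of_pos_left h1
      positivity
    linarith

lemma G_mono : StrictMonoOn S.G (Ici S.ξ) := by
  apply strictMonoOn_of_deriv_pos (convex_Ici S.ξ)
  · intro x hx
    exact (S.hasDerivAt_G x (lt_of_lt_of_le S.hξpos hx)).continuousAt.continuousWithinAt
  · intro x hx
    rw [interior_Ici] at hx
    have hx0 : (0:ℝ) < x := lt_trans S.hξpos hx
    rw [(S.hasDerivAt_G x hx0).deriv]
    have h1 : x ^ (-S.α) < S.ξ ^ (-S.α) :=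
      Real.rpow_lt_rpow_of_neg S.hξpos hx (by linarith [S.hα0])
    rw [S.hξpow] at h1
    have hα0 := S.hα0
    have : 1/S.α * x ^ (-S.α) < S.p := by
      rw [show S.p = 1/S.α * (S.α * S.p) by field_simp]
      apply mul_lt_mul_of_pos_left h1
      positivity
    linarith

lemma G_min (x : ℝ) (hx : 0 < x) : S.G S.ξ ≤ S.G x := by
  rcases lt_trichotomy x S.ξ with hc | hc | hc
  · exact le_of_lt (S.G_anti ⟨hx, le_of_lt hc⟩ ⟨S.hξpos, le_refl _⟩ hc)
  · rw [hc]
  · exact le_of_lt (S.G_mono self_mem_Ici (le_of_lt hc) hc)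

lemma G_xi_pos : 0 < S.G S.ξ := by
  have h1 : 0 < S.p * S.ξ := mul_pos S.hp S.hξpos
  have h2 : 0 < (1/(S.α*(S.α-1))) * S.ξ ^ (1-S.α) := by
    have hα := S.hα
    have := Real.rpow_pos_of_pos S.hξpos (1-S.α)
    have hd : 0 < 1/(S.α*(S.α-1)) := by
      apply div_pos one_pos
      apply mul_pos S.hα0
      linarith
    positivity
  unfold G
  linarith

lemma G_pos (x : ℝ) (hx : 0 < x) : 0 < S.G x := lt_of_lt_of_le S.G_xi_pos (S.G_min x hx)

/-- base point -/
def rho : ℝ := S.rk 0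

lemma rho_pos : 0 < S.rho := S.hrkpos 0

lemma E_le (r : ℝ) (hr : S.rho ≤ r) : S.E r ≤ S.E S.rho :=
  S.E_anti S.rho_pos (lt_of_lt_of_le S.rho_pos hr) hr

lemma G_le_E (r : ℝ) (hr : r ∈ Ioi (0:ℝ)) : S.G (S.h r) ≤ S.E r := by
  have := sq_nonneg (S.h1 r)
  unfold E
  nlinarith

lemma E_lower (r : ℝ) (hr : r ∈ Ioi (0:ℝ)) :
    S.G S.ξ ≤ S.E r := le_trans (S.G_min _ (S.hpos r hr)) (S.G_le_E r hr)

/-- upper bound for `h` -/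
def Mb : ℝ := S.E S.rho / S.p

lemma Mb_pos : 0 < S.Mb :=
  div_pos (lt_of_lt_of_le S.G_xi_pos (S.E_lower _ S.rho_pos)) S.hp

lemma h_le (r : ℝ) (hr : S.rho ≤ r) : S.h r ≤ S.Mb := by
  have hr0 : r ∈ Ioi (0:ℝ) := lt_of_lt_of_le S.rho_pos hr
  have h1 : S.G (S.h r) ≤ S.E S.rho := le_trans (S.G_le_E r hr0) (S.E_le r hr)
  have h2 : 0 < (1/(S.α*(S.α-1))) * S.h r ^ (1-S.α) := by
    have hα := S.hα
    have := Real.rpow_pos_of_pos (S.hpos r hr0) (1-S.α)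
    have hd : 0 < 1/(S.α*(S.α-1)) := by
      apply div_pos one_pos
      apply mul_pos S.hα0
      linarith
    positivity
  have h3 : S.p * S.h r ≤ S.E S.rho := by
    unfold G at h1
    linarith
  rw [Mb, le_div_iff₀ S.hp]
  nlinarith [h3]

/-- lower bound for `h` -/
def mb : ℝ := (S.E S.rho * (S.α*(S.α-1))) ^ (1/(1-S.α))

lemma mb_pos : 0 < S.mb := by
  apply Real.rpow_pos_of_pos
  have hα := S.hα
  have h1 : 0 < S.E S.rho := lt_of_lt_of_le S.G_xi_pos (S.E_lower _ S.rho_pos)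
  apply mul_pos h1
  apply mul_pos S.hα0
  linarith

lemma h_ge (r : ℝ) (hr : S.rho ≤ r) : S.mb ≤ S.h r := by
  have hα := S.hα
  have hα0 := S.hα0
  have hr0 : r ∈ Ioi (0:ℝ) := lt_of_lt_of_le S.rho_pos hr
  have hpos := S.hpos r hr0
  have h1 : S.G (S.h r) ≤ S.E S.rho := le_trans (S.G_le_E r hr0) (S.E_le r hr)
  have hph : 0 < S.p * S.h r := mul_pos S.hp hpos
  have hd : 0 < S.α*(S.α-1) := mul_pos S.hα0 (by linarith)
  have h2 : S.h r ^ (1-S.α) ≤ S.E S.rho * (S.α*(S.α-1)) := by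
    unfold G at h1
    rw [show S.h r ^ (1-S.α) = ((1/(S.α*(S.α-1))) * S.h r ^ (1-S.α)) * (S.α*(S.α-1)) by
      field_simp; exact (div_self (sub_ne_zero.mpr (ne_of_gt hα))).symm]
    have : (1/(S.α*(S.α-1))) * S.h r ^ (1-S.α) ≤ S.E S.rho := by linarith
    exact mul_le_mul_of_nonneg_right this hd.le
  have h3 := Real.rpow_le_rpow_of_nonpos (Real.rpow_pos_of_pos hpos (1-S.α)) h2
    (z := 1/(1-S.α)) (by
      apply div_nonpos_of_nonneg_of_nonpos zero_le_one
      linarith)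
  rw [← Real.rpow_mul hpos.le,
    show (1-S.α)*(1/(1-S.α)) = 1 by
      field_simp
      exact div_self (by intro hc; rw [sub_eq_zero] at hc; linarith), Real.rpow_one] at h3
  unfold mb
  exact h3

/-- bound for `h1` -/
def Bb : ℝ := Real.sqrt (2*(S.E S.rho - S.G S.ξ))

lemma h1_le (r : ℝ) (hr : S.rho ≤ r) : |S.h1 r| ≤ S.Bb := by
  have hr0 : r ∈ Ioi (0:ℝ) := lt_of_lt_of_le S.rho_pos hr
  have h1 : (1/2) * (S.h1 r)^2 ≤ S.E S.rho - S.G S.ξ := by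
    have h2 : S.G S.ξ ≤ S.G (S.h r) := S.G_min _ (S.hpos r hr0)
    have h3 := S.E_le r hr
    have hEr : S.E r = (1/2) * (S.h1 r)^2 + S.G (S.h r) := rfl
    have hErho : S.E S.rho = (1/2) * (S.h1 S.rho)^2 + S.G (S.h S.rho) := rfl
    nlinarith [sq_nonneg (S.h1 S.rho), S.G_min (S.h S.rho) (S.hpos _ S.rho_pos)]
  have h4 : (S.h1 r)^2 ≤ 2*(S.E S.rho - S.G S.ξ) := by linarith
  rw [Bb, ← Real.sqrt_sq_eq_abs]
  exact Real.sqrt_le_sqrt h4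

lemma rk_mem (k : ℕ) : S.rk k ∈ Ioi (0:ℝ) := S.hrkpos k

/-- The limit of the energy. -/
def L : ℝ := ⨅ k, S.E (S.rk k)

lemma E_rk_anti : Antitone (fun k => S.E (S.rk k)) :=
  fun j k hjk => S.E_anti (S.rk_mem j) (S.rk_mem k) (S.hmono.monotone hjk)

lemma E_rk_bdd : BddBelow (Set.range fun k => S.E (S.rk k)) := by
  refine ⟨S.G S.ξ, ?_⟩
  rintro x ⟨k, rfl⟩
  exact S.E_lower _ (S.rk_mem k)

lemma L_le (k : ℕ) : S.L ≤ S.E (S.rk k) := ciInf_le S.E_rk_bdd k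

lemma L_lower : S.G S.ξ ≤ S.L := le_ciInf fun k => S.E_lower _ (S.rk_mem k)

lemma tendsto_E_rk : Tendsto (fun k => S.E (S.rk k)) atTop (nhds S.L) :=
  tendsto_atTop_ciInf S.E_rk_anti S.E_rk_bdd

lemma L_le_E (r : ℝ) (hr : 0 < r) : S.L ≤ S.E r := by
  obtain ⟨k, hk⟩ := (S.rk_tendsto.eventually_ge_atTop r).exists
  exact le_trans (S.L_le k) (S.E_anti hr (S.rk_mem k) hk)

lemma tendsto_E : Tendsto S.E atTop (nhds S.L) := by
  rw [Metric.tendsto_atTop]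
  intro ε hε
  obtain ⟨K, hK⟩ := (S.tendsto_E_rk.eventually (gt_mem_nhds (lt_add_of_pos_right S.L hε))).exists
  refine ⟨S.rk K, fun r hr => ?_⟩
  have hr0 : 0 < r := lt_of_lt_of_le (S.hrkpos K) hr
  have h1 : S.E r ≤ S.E (S.rk K) := S.E_anti (S.rk_mem K) hr0 hr
  have h2 : S.L ≤ S.E r := S.L_le_E r hr0
  rw [Real.dist_eq, abs_lt]
  constructor <;> [linarith; linarith]

lemma no_crit_between (k : ℕ) {t : ℝ} (ht : t ∈ Ioo (S.rk k) (S.rk (k+1))) :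
    S.h1 t ≠ 0 := by
  intro hz
  have ht0 : 0 < t := lt_trans (S.hrkpos k) ht.1
  obtain ⟨j, hj⟩ := S.crit_is_rk ht0 hz
  have h1 : k < j := S.hmono.lt_iff_lt.mp (by rw [hj]; exact ht.1)
  have h2 : j < k+1 := S.hmono.lt_iff_lt.mp (by rw [hj]; exact ht.2)
  omega

lemma sign_const (k : ℕ) :
    (∀ t ∈ Ioo (S.rk k) (S.rk (k+1)), 0 < S.h1 t) ∨
    (∀ t ∈ Ioo (S.rk k) (S.rk (k+1)), S.h1 t < 0) := by
  by_contra hcon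
  push_neg at hcon
  obtain ⟨⟨t1, ht1, ht1le⟩, ⟨t2, ht2, ht2ge⟩⟩ := hcon
  have ht1lt : S.h1 t1 < 0 := lt_of_le_of_ne ht1le (S.no_crit_between k ht1)
  have ht2gt : 0 < S.h1 t2 := lt_of_le_of_ne ht2ge (Ne.symm (S.no_crit_between k ht2))
  have hIoosub : Icc (min t1 t2) (max t1 t2) ⊆ Ioo (S.rk k) (S.rk (k+1)) := by
    intro z hz
    constructor
    · calc S.rk k < min t1 t2 := lt_min ht1.1 ht2.1
        _ ≤ z := hz.1
    · calc z ≤ max t1 t2 := hz.2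
        _ < S.rk (k+1) := max_lt ht1.2 ht2.2
  have hsub0 : Icc (min t1 t2) (max t1 t2) ⊆ Ioi (0:ℝ) :=
    fun z hz => lt_trans (S.hrkpos k) (hIoosub hz).1
  have hcont : ContinuousOn S.h1 (Icc (min t1 t2) (max t1 t2)) := S.contOn_h1.mono hsub0
  rcases le_total t1 t2 with hle | hle
  · rw [min_eq_left hle, max_eq_right hle] at hIoosub hcont
    have := intermediate_value_Icc hle hcont
    obtain ⟨z, hz, hz0⟩ := this ⟨ht1lt.le, ht2gt.le⟩
    exact S.no_crit_between k (hIoosub hz) hz0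
  · rw [min_eq_right hle, max_eq_left hle] at hIoosub hcont
    have := intermediate_value_Icc' hle hcont
    obtain ⟨z, hz, hz0⟩ := this ⟨ht1lt.le, ht2gt.le⟩
    exact S.no_crit_between k (hIoosub hz) hz0

lemma h2_right (k : ℕ) (hc : ∀ t ∈ Ioo (S.rk k) (S.rk (k+1)), 0 ≤ S.h1 t) :
    0 ≤ S.h2 (S.rk k) := by
  have hda := S.hasDerivAt_h1 (S.rk k) (S.rk_mem k)
  rw [hasDerivAt_iff_tendsto_slope] at hda
  have hmono := S.hmono (Nat.lt_succ_self k)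
  have hslope : Tendsto (slope S.h1 (S.rk k))
      (nhdsWithin (S.rk k) (Ioo (S.rk k) (S.rk (k+1)))) (nhds (S.h2 (S.rk k))) :=
    hda.mono_left (nhdsWithin_mono _ (fun t ht => ht.1.ne'))
  rw [nhdsWithin_Ioo_eq_nhdsGT hmono] at hslope
  apply ge_of_tendsto hslope
  filter_upwards [Ioo_mem_nhdsGT_of_mem (c := S.rk k) ⟨le_refl _, hmono⟩] with t ht
  rw [slope_def_field, S.rk_crit]
  apply div_nonneg (by simpa using hc t ht) (by linarith [ht.1])

lemma h2_right' (k : ℕ) (hc : ∀ t ∈ Ioo (S.rk k) (S.rk (k+1)), S.h1 t ≤ 0) :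
    S.h2 (S.rk k) ≤ 0 := by
  have hda := S.hasDerivAt_h1 (S.rk k) (S.rk_mem k)
  rw [hasDerivAt_iff_tendsto_slope] at hda
  have hmono := S.hmono (Nat.lt_succ_self k)
  have hslope : Tendsto (slope S.h1 (S.rk k))
      (nhdsWithin (S.rk k) (Ioo (S.rk k) (S.rk (k+1)))) (nhds (S.h2 (S.rk k))) :=
    hda.mono_left (nhdsWithin_mono _ (fun t ht => ht.1.ne'))
  rw [nhdsWithin_Ioo_eq_nhdsGT hmono] at hslope
  apply le_of_tendsto hslope
  filter_upwards [Ioo_mem_nhdsGT_of_mem (c := S.rk k) ⟨le_refl _, hmono⟩] with t ht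
  rw [slope_def_field, S.rk_crit]
  apply div_nonpos_of_nonpos_of_nonneg (by simpa using hc t ht) (by linarith [ht.1])

lemma h2_left (k : ℕ) (hc : ∀ t ∈ Ioo (S.rk k) (S.rk (k+1)), 0 ≤ S.h1 t) :
    S.h2 (S.rk (k+1)) ≤ 0 := by
  have hda := S.hasDerivAt_h1 (S.rk (k+1)) (S.rk_mem (k+1))
  rw [hasDerivAt_iff_tendsto_slope] at hda
  have hmono := S.hmono (Nat.lt_succ_self k)
  have hslope : Tendsto (slope S.h1 (S.rk (k+1)))
      (nhdsWithin (S.rk (k+1)) (Ioo (S.rk k) (S.rk (k+1)))) (nhds (S.h2 (S.rk (k+1)))) :=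
    hda.mono_left (nhdsWithin_mono _ (fun t ht => ht.2.ne))
  rw [nhdsWithin_Ioo_eq_nhdsLT hmono] at hslope
  apply le_of_tendsto hslope
  filter_upwards [Ioo_mem_nhdsLT_of_mem (a := S.rk k) (b := S.rk (k+1)) ⟨hmono, le_refl _⟩]
    with t ht
  rw [slope_def_field, S.rk_crit]
  apply div_nonpos_of_nonneg_of_nonpos (by simpa using hc t ht) (by linarith [ht.2])

lemma h2_left' (k : ℕ) (hc : ∀ t ∈ Ioo (S.rk k) (S.rk (k+1)), S.h1 t ≤ 0) :
    0 ≤ S.h2 (S.rk (k+1)) := by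
  have hda := S.hasDerivAt_h1 (S.rk (k+1)) (S.rk_mem (k+1))
  rw [hasDerivAt_iff_tendsto_slope] at hda
  have hmono := S.hmono (Nat.lt_succ_self k)
  have hslope : Tendsto (slope S.h1 (S.rk (k+1)))
      (nhdsWithin (S.rk (k+1)) (Ioo (S.rk k) (S.rk (k+1)))) (nhds (S.h2 (S.rk (k+1)))) :=
    hda.mono_left (nhdsWithin_mono _ (fun t ht => ht.2.ne))
  rw [nhdsWithin_Ioo_eq_nhdsLT hmono] at hslope
  apply ge_of_tendsto hslope
  filter_upwards [Ioo_mem_nhdsLT_of_mem (a := S.rk k) (b := S.rk (k+1)) ⟨hmono, le_refl _⟩]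
    with t ht
  rw [slope_def_field, S.rk_crit]
  rw [div_nonneg_iff]
  right
  exact ⟨by simpa using hc t ht, by linarith [ht.2]⟩

lemma crit_val_lt (k : ℕ) (h2pos : 0 ≤ S.h2 (S.rk k)) : S.h (S.rk k) < S.ξ := by
  rcases lt_trichotomy (S.h (S.rk k)) S.ξ with hc | hc | hc
  · exact hc
  · exact absurd hc (S.crit_ne _ (S.rk_mem k) (S.rk_crit k))
  · exact absurd h2pos (not_le.mpr (S.h2_crit_neg _ (S.rk_mem k) (S.rk_crit k) hc))

lemma crit_val_gt (k : ℕ) (h2neg : S.h2 (S.rk k) ≤ 0) : S.ξ < S.h (S.rk k) := by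
  rcases lt_trichotomy (S.h (S.rk k)) S.ξ with hc | hc | hc
  · exact absurd h2neg (not_le.mpr (S.h2_crit_pos _ (S.rk_mem k) (S.rk_crit k) hc))
  · exact absurd hc (S.crit_ne _ (S.rk_mem k) (S.rk_crit k))
  · exact hc

lemma alternation (k : ℕ) :
    (S.h (S.rk k) < S.ξ ∧ S.ξ < S.h (S.rk (k+1))) ∨
    (S.ξ < S.h (S.rk k) ∧ S.h (S.rk (k+1)) < S.ξ) := by
  rcases S.sign_const k with hc | hc
  · left
    exact ⟨S.crit_val_lt k (S.h2_right k (fun t ht => (hc t ht).le)),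
      S.crit_val_gt (k+1) (S.h2_left k (fun t ht => (hc t ht).le))⟩
  · right
    exact ⟨S.crit_val_gt k (S.h2_right' k (fun t ht => (hc t ht).le)),
      S.crit_val_lt (k+1) (S.h2_left' k (fun t ht => (hc t ht).le))⟩



end Sol

section Sturm

/-- Sturm comparison, upper bound for the gap between zeros:
if `u'' = -q u` with `q ≥ m > 0`, `u(a) = 0` and `u > 0` on `(a,b)`, then `b - a ≤ π/√m`. -/
lemma sturm_upper {u u' q : ℝ → ℝ} {a b m : ℝ} (hab : a < b) (hm : 0 < m)
    (hu : ∀ t ∈ Icc a b, HasDerivAt u (u' t) t)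
    (hu' : ∀ t ∈ Icc a b, HasDerivAt u' (-(q t) * u t) t)
    (hq : ∀ t ∈ Icc a b, m ≤ q t)
    (ha : u a = 0) (hpos : ∀ t ∈ Ioo a b, 0 < u t) :
    b - a ≤ Real.pi / Real.sqrt m := by
  by_contra hcon
  push_neg at hcon
  set sm : ℝ := Real.sqrt m with hsm_def
  have hsm : 0 < sm := Real.sqrt_pos.mpr hm
  have hsm2 : sm * sm = m := Real.mul_self_sqrt hm.le
  set c : ℝ := a + Real.pi / sm with hc_def
  have hac : a < c := by
    have h0 := Real.pi_pos
    have : 0 < Real.pi / sm := div_pos h0 hsm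
    simp only [hc_def]; linarith
  have hcb : c < b := by simp only [hc_def]; linarith
  have hca : sm * (c - a) = Real.pi := by
    simp only [hc_def, add_sub_cancel_left]
    field_simp
  have hIcc : Icc a c ⊆ Icc a b := Icc_subset_Icc_right (by linarith)
  have hinner : ∀ t : ℝ, HasDerivAt (fun t : ℝ => sm*(t-a)) sm t := by
    intro t
    simpa using ((hasDerivAt_id t).sub_const a).const_mul sm
  have hsin : ∀ t : ℝ, HasDerivAt (fun t : ℝ => Real.sin (sm*(t-a)))
      (Real.cos (sm*(t-a)) * sm) t :=
    fun t => (Real.hasDerivAt_sin _).comp t (hinner t)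
  have hcos : ∀ t : ℝ, HasDerivAt (fun t : ℝ => Real.cos (sm*(t-a)))
      (-Real.sin (sm*(t-a)) * sm) t :=
    fun t => (Real.hasDerivAt_cos _).comp t (hinner t)
  set W : ℝ → ℝ := fun t => u t * (sm * Real.cos (sm*(t-a))) - u' t * Real.sin (sm*(t-a))
    with hW_def
  have hW : ∀ t ∈ Icc a c, HasDerivAt W ((q t - m) * (u t * Real.sin (sm*(t-a)))) t := by
    intro t ht
    have := ((hu t (hIcc ht)).mul ((hcos t).const_mul sm)).sub
      ((hu' t (hIcc ht)).mul (hsin t))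
    refine (this).congr_deriv (Eq.symm ?_)
    linear_combination (u t * Real.sin (sm*(t-a))) * hsm2
  have hunn : ∀ t ∈ Icc a c, 0 ≤ u t := by
    intro t ht
    rcases eq_or_lt_of_le ht.1 with heq | hlt
    · rw [← heq, ha]
    · exact (hpos t ⟨hlt, lt_of_le_of_lt ht.2 hcb⟩).le
  have hsinn : ∀ t ∈ Icc a c, 0 ≤ Real.sin (sm*(t-a)) := by
    intro t ht
    apply Real.sin_nonneg_of_nonneg_of_le_pi
    · exact mul_nonneg hsm.le (by linarith [ht.1])
    · rw [← hca]
      exact mul_le_mul_of_nonneg_left (by linarith [ht.2]) hsm.le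
  have hmonoW : MonotoneOn W (Icc a c) := by
    apply monotoneOn_of_deriv_nonneg (convex_Icc a c)
    · exact fun t ht => (hW t ht).continuousAt.continuousWithinAt
    · intro t ht
      rw [interior_Icc] at ht
      exact (hW t (Ioo_subset_Icc_self ht)).differentiableAt.differentiableWithinAt
    · intro t ht
      rw [interior_Icc] at ht
      rw [(hW t (Ioo_subset_Icc_self ht)).deriv]
      have h1 := hq t (hIcc (Ioo_subset_Icc_self ht))
      have h2 := hunn t (Ioo_subset_Icc_self ht)
      have h3 := hsinn t (Ioo_subset_Icc_self ht)
      have : 0 ≤ q t - m := by linarith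
      positivity
  have hWa : W a = 0 := by
    simp [hW_def, ha]
  have hWc : W c = -(sm * u c) := by
    simp only [hW_def, hca, Real.cos_pi, Real.sin_pi, mul_zero, sub_zero, mul_neg_one]
    ring
  have hle := hmonoW (left_mem_Icc.mpr hac.le) (right_mem_Icc.mpr hac.le) hac.le
  rw [hWa, hWc] at hle
  have hupos : 0 < u c := hpos c ⟨hac, hcb⟩
  nlinarith

/-- Sturm comparison, lower bound for the gap between zeros. -/
lemma sturm_lower {u u' q : ℝ → ℝ} {a b M : ℝ} (hab : a < b) (hM : 0 < M)
    (hu : ∀ t ∈ Icc a b, HasDerivAt u (u' t) t)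
    (hu' : ∀ t ∈ Icc a b, HasDerivAt u' (-(q t) * u t) t)
    (hq : ∀ t ∈ Icc a b, q t ≤ M)
    (ha : u a = 0) (hb : u b = 0) (hub : u' b < 0)
    (hpos : ∀ t ∈ Ioo a b, 0 < u t) :
    Real.pi / Real.sqrt M ≤ b - a := by
  by_contra hcon
  push_neg at hcon
  set sM : ℝ := Real.sqrt M with hsM_def
  have hsM : 0 < sM := Real.sqrt_pos.mpr hM
  have hsM2 : sM * sM = M := Real.mul_self_sqrt hM.le
  have hlt : sM * (b - a) < Real.pi := by
    have h1 := (lt_div_iff₀ hsM).mp hcon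
    linarith [h1]
  have hinner : ∀ t : ℝ, HasDerivAt (fun t : ℝ => sM*(t-a)) sM t := by
    intro t
    simpa using ((hasDerivAt_id t).sub_const a).const_mul sM
  have hsin : ∀ t : ℝ, HasDerivAt (fun t : ℝ => Real.sin (sM*(t-a)))
      (Real.cos (sM*(t-a)) * sM) t :=
    fun t => (Real.hasDerivAt_sin _).comp t (hinner t)
  have hcos : ∀ t : ℝ, HasDerivAt (fun t : ℝ => Real.cos (sM*(t-a)))
      (-Real.sin (sM*(t-a)) * sM) t :=
    fun t => (Real.hasDerivAt_cos _).comp t (hinner t)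
  set W : ℝ → ℝ := fun t => u' t * Real.sin (sM*(t-a)) - u t * (sM * Real.cos (sM*(t-a)))
    with hW_def
  have hW : ∀ t ∈ Icc a b, HasDerivAt W ((M - q t) * (u t * Real.sin (sM*(t-a)))) t := by
    intro t ht
    have := ((hu' t ht).mul (hsin t)).sub ((hu t ht).mul ((hcos t).const_mul sM))
    refine (this).congr_deriv (Eq.symm ?_)
    linear_combination (-(u t * Real.sin (sM*(t-a)))) * hsM2
  have hunn : ∀ t ∈ Icc a b, 0 ≤ u t := by
    intro t ht
    rcases eq_or_lt_of_le ht.1 with heq | hlt'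
    · rw [← heq, ha]
    · rcases eq_or_lt_of_le ht.2 with heq | hlt''
      · rw [heq, hb]
      · exact (hpos t ⟨hlt', hlt''⟩).le
  have hsinn : ∀ t ∈ Icc a b, 0 ≤ Real.sin (sM*(t-a)) := by
    intro t ht
    apply Real.sin_nonneg_of_nonneg_of_le_pi
    · exact mul_nonneg hsM.le (by linarith [ht.1])
    · have : sM * (t-a) ≤ sM * (b-a) := mul_le_mul_of_nonneg_left (by linarith [ht.2]) hsM.le
      linarith
  have hmonoW : MonotoneOn W (Icc a b) := by
    apply monotoneOn_of_deriv_nonneg (convex_Icc a b)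
    · exact fun t ht => (hW t ht).continuousAt.continuousWithinAt
    · intro t ht
      rw [interior_Icc] at ht
      exact (hW t (Ioo_subset_Icc_self ht)).differentiableAt.differentiableWithinAt
    · intro t ht
      rw [interior_Icc] at ht
      rw [(hW t (Ioo_subset_Icc_self ht)).deriv]
      have h1 := hq t (Ioo_subset_Icc_self ht)
      have h2 := hunn t (Ioo_subset_Icc_self ht)
      have h3 := hsinn t (Ioo_subset_Icc_self ht)
      have : 0 ≤ M - q t := by linarith
      positivity
  have hWa : W a = 0 := by
    simp [hW_def, ha]
  have hWb : W b = u' b * Real.sin (sM*(b-a)) := by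
    simp [hW_def, hb]
  have hle := hmonoW (left_mem_Icc.mpr hab.le) (right_mem_Icc.mpr hab.le) hab.le
  rw [hWa, hWb] at hle
  have hsinb : 0 < Real.sin (sM*(b-a)) := by
    apply Real.sin_pos_of_pos_of_lt_pi
    · exact mul_pos hsM (by linarith)
    · exact hlt
  nlinarith

end Sturm

namespace Sol

variable (S : Sol)

/-- exponent in the Liouville transform -/
def cc : ℝ := ((S.N:ℝ)-1)/2

/-- the transformed function `w = r^c h'` whose zeros are the critical points -/
def w (r : ℝ) : ℝ := r ^ S.cc * S.h1 r

/-- derivative of `w` -/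
def w1 (r : ℝ) : ℝ := S.cc * r ^ (S.cc-1) * S.h1 r + r ^ S.cc * S.h2 r

/-- potential in the transformed equation -/
def qq (r : ℝ) : ℝ := S.h r ^ (-S.α-1) - (((S.N:ℝ)^2-1)/4)/r^2

lemma hasDerivAt_w : ∀ r ∈ Ioi (0:ℝ), HasDerivAt S.w (S.w1 r) r := by
  intro r hr
  have hr0 : (0:ℝ) < r := hr
  have d1 : HasDerivAt (fun t : ℝ => t ^ S.cc) (S.cc * r ^ (S.cc-1)) r :=
    Real.hasDerivAt_rpow_const (Or.inl (ne_of_gt hr0))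
  exact d1.mul (S.hasDerivAt_h1 r hr)

lemma hasDerivAt_w1 : ∀ r ∈ Ioi (0:ℝ), HasDerivAt S.w1 (-(S.qq r) * S.w r) r := by
  intro r hr
  have hr0 : (0:ℝ) < r := hr
  have hrne : r ≠ 0 := ne_of_gt hr0
  have d0 : HasDerivAt (fun t : ℝ => t ^ (S.cc-1)) ((S.cc-1) * r ^ (S.cc-1-1)) r :=
    Real.hasDerivAt_rpow_const (Or.inl hrne)
  have d0' : HasDerivAt (fun t : ℝ => t ^ S.cc) (S.cc * r ^ (S.cc-1)) r :=
    Real.hasDerivAt_rpow_const (Or.inl hrne)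
  have d1 : HasDerivAt (fun t : ℝ => S.cc * t ^ (S.cc-1) * S.h1 t)
      ((S.cc * ((S.cc-1) * r ^ (S.cc-1-1))) * S.h1 r + S.cc * r ^ (S.cc-1) * S.h2 r) r :=
    (d0.const_mul S.cc).mul (S.hasDerivAt_h1 r hr)
  have d2 : HasDerivAt (fun t : ℝ => t ^ S.cc * S.h2 t)
      (S.cc * r ^ (S.cc-1) * S.h2 r + r ^ S.cc *
        (-(S.h r ^ (-S.α-1)) * S.h1 r + ((S.N:ℝ)-1)/r^2 * S.h1 r - ((S.N:ℝ)-1)/r * S.h2 r)) r :=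
    d0'.mul (S.hasDerivAt_h2 r hr)
  have dsum := d1.add d2
  have e1 : r ^ (S.cc - 1) = r ^ S.cc / r := by
    rw [Real.rpow_sub hr0, Real.rpow_one]
  have e2 : r ^ (S.cc - 1 - 1) = r ^ S.cc / r^2 := by
    rw [show S.cc - 1 - 1 = S.cc - 2 by ring, Real.rpow_sub hr0]
    congr 1
    rw [show (2:ℝ) = ((2:ℕ):ℝ) by norm_num, Real.rpow_natCast]
  refine (dsum).congr_deriv (Eq.symm ?_)
  rw [e1, e2]
  unfold qq w cc
  field_simp
  ring

lemma rpow_cc_pos (r : ℝ) (hr : 0 < r) : 0 < r ^ S.cc := Real.rpow_pos_of_pos hr _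

lemma gap_pos (k : ℕ) : S.rk k < S.rk (k+1) := S.hmono (Nat.lt_succ_self k)

lemma Icc_rk_sub (k : ℕ) : Icc (S.rk k) (S.rk (k+1)) ⊆ Ioi (0:ℝ) :=
  fun t ht => lt_of_lt_of_le (S.hrkpos k) ht.1

lemma gap_upper (k : ℕ) (m : ℝ) (hm : 0 < m)
    (hq : ∀ t ∈ Icc (S.rk k) (S.rk (k+1)), m ≤ S.qq t) :
    S.rk (k+1) - S.rk k ≤ Real.pi / Real.sqrt m := by
  have hab := S.gap_pos k
  have hsub := S.Icc_rk_sub k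
  rcases S.sign_const k with hc | hc
  · apply sturm_upper hab hm (fun t ht => S.hasDerivAt_w t (hsub ht))
      (fun t ht => S.hasDerivAt_w1 t (hsub ht)) hq
    · unfold w
      rw [S.rk_crit k, mul_zero]
    · intro t ht
      have ht0 : 0 < t := lt_trans (S.hrkpos k) ht.1
      exact mul_pos (S.rpow_cc_pos t ht0) (hc t ht)
  · apply sturm_upper hab hm (u := fun t => -S.w t) (u' := fun t => -S.w1 t)
      (fun t ht => (S.hasDerivAt_w t (hsub ht)).neg)
      (fun t ht => by
        have := (S.hasDerivAt_w1 t (hsub ht)).neg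
        refine (this).congr_deriv (Eq.symm ?_)
        ring) hq
    · unfold w
      rw [S.rk_crit k, mul_zero, neg_zero]
    · intro t ht
      have ht0 : 0 < t := lt_trans (S.hrkpos k) ht.1
      have := mul_pos (S.rpow_cc_pos t ht0) (neg_pos.mpr (hc t ht))
      unfold w
      nlinarith

lemma gap_lower (k : ℕ) (M : ℝ) (hM : 0 < M)
    (hq : ∀ t ∈ Icc (S.rk k) (S.rk (k+1)), S.qq t ≤ M) :
    Real.pi / Real.sqrt M ≤ S.rk (k+1) - S.rk k := by
  have hab := S.gap_pos k
  have hsub := S.Icc_rk_sub k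
  rcases S.sign_const k with hc | hc
  · apply sturm_lower hab hM (fun t ht => S.hasDerivAt_w t (hsub ht))
      (fun t ht => S.hasDerivAt_w1 t (hsub ht)) hq
    · unfold w
      rw [S.rk_crit k, mul_zero]
    · unfold w
      rw [S.rk_crit (k+1), mul_zero]
    · have hh2 : S.h2 (S.rk (k+1)) < 0 :=
        lt_of_le_of_ne (S.h2_left k (fun t ht => (hc t ht).le))
          (S.h2_crit_ne _ (S.rk_mem (k+1)) (S.rk_crit (k+1)))
      unfold w1
      rw [S.rk_crit (k+1), mul_zero, zero_add]
      exact mul_neg_of_pos_of_neg (S.rpow_cc_pos _ (S.hrkpos (k+1))) hh2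
    · intro t ht
      have ht0 : 0 < t := lt_trans (S.hrkpos k) ht.1
      exact mul_pos (S.rpow_cc_pos t ht0) (hc t ht)
  · apply sturm_lower hab hM (u := fun t => -S.w t) (u' := fun t => -S.w1 t)
      (fun t ht => (S.hasDerivAt_w t (hsub ht)).neg)
      (fun t ht => by
        have := (S.hasDerivAt_w1 t (hsub ht)).neg
        refine (this).congr_deriv (Eq.symm ?_)
        ring) hq
    · unfold w
      rw [S.rk_crit k, mul_zero, neg_zero]
    · unfold w
      rw [S.rk_crit (k+1), mul_zero, neg_zero]
    · have hh2 : 0 < S.h2 (S.rk (k+1)) :=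
        lt_of_le_of_ne (S.h2_left' k (fun t ht => (hc t ht).le))
          (Ne.symm (S.h2_crit_ne _ (S.rk_mem (k+1)) (S.rk_crit (k+1))))
      unfold w1
      rw [S.rk_crit (k+1), mul_zero, zero_add, neg_lt, neg_zero]
      exact mul_pos (S.rpow_cc_pos _ (S.hrkpos (k+1))) hh2
    · intro t ht
      have ht0 : 0 < t := lt_trans (S.hrkpos k) ht.1
      have := mul_pos (S.rpow_cc_pos t ht0) (neg_pos.mpr (hc t ht))
      unfold w
      nlinarith


lemma E_rk_val (k : ℕ) : S.E (S.rk k) = S.G (S.h (S.rk k)) := by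
  have : S.E (S.rk k) = (1/2) * (S.h1 (S.rk k))^2 + S.G (S.h (S.rk k)) := rfl
  rw [this, S.rk_crit k]
  norm_num

lemma h1_lip : ∃ C₂ : ℝ, 0 < C₂ ∧
    ∀ x ∈ Ici S.rho, ∀ y ∈ Ici S.rho, |S.h1 y - S.h1 x| ≤ C₂ * |y - x| := by
  set C₂ : ℝ := 1/S.α * S.mb ^ (-S.α) + S.p + ((S.N:ℝ)-1)/S.rho * S.Bb with hC₂_def
  have hBb0 : 0 ≤ S.Bb := Real.sqrt_nonneg _
  have hterm1 : 0 ≤ 1/S.α * S.mb ^ (-S.α) := by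
    have := Real.rpow_pos_of_pos S.mb_pos (-S.α)
    have := S.hα0
    positivity
  have hterm3 : 0 ≤ ((S.N:ℝ)-1)/S.rho * S.Bb := by
    apply mul_nonneg _ hBb0
    apply div_nonneg (by linarith [S.hN1]) S.rho_pos.le
  have hC₂pos : 0 < C₂ := by
    have := S.hp
    simp only [hC₂_def]
    linarith
  refine ⟨C₂, hC₂pos, ?_⟩
  have hbound : ∀ r ∈ Ici S.rho, ‖S.h2 r‖ ≤ C₂ := by
    intro r hr
    have hr' : S.rho ≤ r := hr
    have hr0 : r ∈ Ioi (0:ℝ) := lt_of_lt_of_le S.rho_pos hr'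
    rw [Real.norm_eq_abs, S.h2_eq r hr0]
    have b1 : |1/S.α * S.h r ^ (-S.α)| ≤ 1/S.α * S.mb ^ (-S.α) := by
      rw [abs_of_nonneg (by
        have := Real.rpow_pos_of_pos (S.hpos r hr0) (-S.α)
        have := S.hα0
        positivity)]
      apply mul_le_mul_of_nonneg_left _ (by have := S.hα0; positivity)
      exact Real.rpow_le_rpow_of_nonpos S.mb_pos (S.h_ge r hr') (by linarith [S.hα0])
    have b3 : |((S.N:ℝ)-1)/r * S.h1 r| ≤ ((S.N:ℝ)-1)/S.rho * S.Bb := by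
      rw [abs_mul]
      apply mul_le_mul _ (S.h1_le r hr') (abs_nonneg _) (div_nonneg (by linarith [S.hN1]) S.rho_pos.le)
      rw [abs_of_nonneg (div_nonneg (by linarith [S.hN1]) (le_of_lt hr0))]
      gcongr
      · linarith [S.hN1]
      · exact S.rho_pos
    calc |1/S.α * S.h r ^ (-S.α) - S.p - ((S.N:ℝ)-1)/r * S.h1 r|
        ≤ |1/S.α * S.h r ^ (-S.α) - S.p| + |((S.N:ℝ)-1)/r * S.h1 r| := abs_sub _ _
      _ ≤ (|1/S.α * S.h r ^ (-S.α)| + |S.p|) + |((S.N:ℝ)-1)/r * S.h1 r| := by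
          linarith [abs_sub (1/S.α * S.h r ^ (-S.α)) S.p]
      _ ≤ C₂ := by
          rw [abs_of_pos S.hp]
          simp only [hC₂_def]
          linarith
  intro x hx y hy
  have := Convex.norm_image_sub_le_of_norm_hasDerivWithin_le
    (f := S.h1) (f' := S.h2) (s := Ici S.rho) (C := C₂)
    (fun z hz => (S.hasDerivAt_h1 z (lt_of_lt_of_le S.rho_pos hz)).hasDerivWithinAt)
    hbound (convex_Ici _) hx hy
  simpa [Real.norm_eq_abs] using this

lemma energy_drop (k : ℕ) (hρ : S.rho ≤ S.rk k) (d₀ C₂ : ℝ) (hd₀ : 0 < d₀) (hC₂ : 0 < C₂)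
    (hlip : ∀ x ∈ Ici S.rho, ∀ y ∈ Ici S.rho, |S.h1 y - S.h1 x| ≤ C₂ * |y - x|)
    (hd : d₀ ≤ |S.h (S.rk (k+1)) - S.h (S.rk k)| / (S.rk (k+1) - S.rk k)) :
    2 * (d₀/(2*C₂)) * (d₀/2)^2 / S.rk (k+1) ≤ S.E (S.rk k) - S.E (S.rk (k+1)) := by
  set a : ℝ := S.rk k with ha_def
  set b : ℝ := S.rk (k+1) with hb_def
  have hab : a < b := S.gap_pos k
  have ha0 : 0 < a := S.hrkpos k
  have hsubI : Icc a b ⊆ Ioi (0:ℝ) := S.Icc_rk_sub k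
  -- mean value theorem
  obtain ⟨ts, hts, hslope⟩ := exists_hasDerivAt_eq_slope S.h S.h1 hab
    (S.contOn_h.mono hsubI) (fun x hx => S.hasDerivAt_h x (hsubI (Ioo_subset_Icc_self hx)))
  have htsρ : S.rho ≤ ts := le_trans hρ hts.1.le
  have hts_abs : d₀ ≤ |S.h1 ts| := by
    rw [hslope, abs_div, abs_of_pos (by linarith [hab] : (0:ℝ) < b - a)]
    exact hd
  set δ₀ : ℝ := d₀/(2*C₂) with hδ₀_def
  have hδ₀ : 0 < δ₀ := by positivity
  have hball : ∀ s, |s - ts| ≤ δ₀ → S.rho ≤ s → d₀/2 ≤ |S.h1 s| := by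
    intro s hs hsρ
    have := hlip ts htsρ s hsρ
    have h1 : |S.h1 s - S.h1 ts| ≤ C₂ * δ₀ := le_trans this (by
      exact mul_le_mul_of_nonneg_left hs hC₂.le)
    have h2 : C₂ * δ₀ = d₀/2 := by
      simp only [hδ₀_def]
      field_simp
    rw [h2] at h1
    have := abs_sub_abs_le_abs_sub (S.h1 ts) (S.h1 s)
    rw [abs_sub_comm] at h1
    linarith [hts_abs]
  have hleft : a < ts - δ₀ := by
    by_contra hcon
    push_neg at hcon
    have h1 : |a - ts| ≤ δ₀ := by
      rw [abs_of_nonpos (by linarith [hts.1])]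
      linarith
    have := hball a h1 hρ
    rw [ha_def, S.rk_crit k] at this
    simp at this
    linarith
  have hright : ts + δ₀ < b := by
    by_contra hcon
    push_neg at hcon
    have h1 : |b - ts| ≤ δ₀ := by
      rw [abs_of_nonneg (by linarith [hts.2])]
      linarith
    have := hball b h1 (le_trans hρ (by linarith [hab]))
    rw [hb_def, S.rk_crit (k+1)] at this
    simp at this
    linarith
  set ck : ℝ := (d₀/2)^2 / b with hck_def
  have hck : 0 < ck := by
    have : 0 < b := lt_trans ha0 hab
    positivity
  set F : ℝ → ℝ := fun t => S.E t + ck * t with hF_def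
  have hIsub : Icc (ts - δ₀) (ts + δ₀) ⊆ Icc a b := by
    apply Icc_subset_Icc <;> linarith
  have hF : ∀ s ∈ Icc (ts - δ₀) (ts + δ₀),
      HasDerivAt F (-(((S.N:ℝ)-1)/s) * (S.h1 s)^2 + ck) s := by
    intro s hs
    have hs0 : s ∈ Ioi (0:ℝ) := hsubI (hIsub hs)
    have d2 : HasDerivAt (fun t : ℝ => ck * t) ck s := by
      simpa using (hasDerivAt_id s).const_mul ck
    exact (S.hasDerivAt_E s hs0).add d2
  have hderiv_neg : ∀ s ∈ Icc (ts - δ₀) (ts + δ₀),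
      -(((S.N:ℝ)-1)/s) * (S.h1 s)^2 + ck ≤ 0 := by
    intro s hs
    have hs0 : (0:ℝ) < s := hsubI (hIsub hs)
    have hsb : s ≤ b := (hIsub hs).2
    have hsρ : S.rho ≤ s := le_trans hρ (hIsub hs).1
    have habs : d₀/2 ≤ |S.h1 s| := by
      apply hball s _ hsρ
      rw [abs_le]
      constructor <;> [linarith [hs.1]; linarith [hs.2]]
    have hsq : (d₀/2)^2 ≤ (S.h1 s)^2 := by
      have := sq_abs (S.h1 s)
      nlinarith [habs, hd₀]
    have e1 : ck ≤ (d₀/2)^2 / s := by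
      rw [hck_def]
      apply div_le_div_of_nonneg_left (by positivity) hs0 hsb
    have e2 : (d₀/2)^2 / s ≤ (S.h1 s)^2 / s := by gcongr
    have hnum : (S.h1 s)^2 ≤ ((S.N:ℝ)-1) * (S.h1 s)^2 := by
      nlinarith [S.hN1, sq_nonneg (S.h1 s)]
    have e3 : (S.h1 s)^2 / s ≤ (((S.N:ℝ)-1)/s) * (S.h1 s)^2 := by
      calc (S.h1 s)^2 / s ≤ (((S.N:ℝ)-1) * (S.h1 s)^2)/s := by gcongr
        _ = (((S.N:ℝ)-1)/s) * (S.h1 s)^2 := by ring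
    linarith
  have hantiF : AntitoneOn F (Icc (ts - δ₀) (ts + δ₀)) := by
    apply antitoneOn_of_deriv_nonpos (convex_Icc _ _)
    · exact fun t ht => (hF t ht).continuousAt.continuousWithinAt
    · intro t ht
      rw [interior_Icc] at ht
      exact (hF t (Ioo_subset_Icc_self ht)).differentiableAt.differentiableWithinAt
    · intro t ht
      rw [interior_Icc] at ht
      rw [(hF t (Ioo_subset_Icc_self ht)).deriv]
      exact hderiv_neg t (Ioo_subset_Icc_self ht)
  have hmem1 : ts - δ₀ ∈ Icc (ts - δ₀) (ts + δ₀) := by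
    constructor <;> [linarith; linarith]
  have hmem2 : ts + δ₀ ∈ Icc (ts - δ₀) (ts + δ₀) := by
    constructor <;> [linarith; linarith]
  have hFle := hantiF hmem1 hmem2 (by linarith)
  simp only [hF_def] at hFle
  have hdrop : 2 * δ₀ * ck ≤ S.E (ts - δ₀) - S.E (ts + δ₀) := by nlinarith [hFle]
  have hmemI1 : ts - δ₀ ∈ Ioi (0:ℝ) := by
    have : (0:ℝ) < a := ha0
    simp only [mem_Ioi]
    linarith
  have hmemI2 : ts + δ₀ ∈ Ioi (0:ℝ) := by
    simp only [mem_Ioi]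
    linarith [hmemI1, hδ₀]
  have hE1 : S.E (ts - δ₀) ≤ S.E a := S.E_anti (S.rk_mem k) hmemI1 (by linarith)
  have hE2 : S.E b ≤ S.E (ts + δ₀) := S.E_anti hmemI2 (S.rk_mem (k+1)) (by linarith)
  have heq2 : 2 * δ₀ * ck = 2 * δ₀ * (d₀/2)^2 / b := by
    rw [hck_def]
    ring
  have hgoal : 2 * δ₀ * (d₀/2)^2 / b ≤ S.E a - S.E b := by linarith
  exact hgoal


lemma L_eq : S.L = S.G S.ξ := by
  by_contra hne
  have hLgt : S.G S.ξ < S.L := lt_of_le_of_ne S.L_lower (Ne.symm hne)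
  set δ : ℝ := (S.L - S.G S.ξ)/2 with hδ_def
  have hδ : 0 < δ := by simp only [hδ_def]; linarith
  have hGc : ContinuousAt S.G S.ξ := (S.hasDerivAt_G S.ξ S.hξpos).continuousAt
  obtain ⟨η, hη, himp⟩ := Metric.continuousAt_iff.mp hGc δ hδ
  have hsep : ∀ k, η ≤ |S.h (S.rk k) - S.ξ| := by
    intro k
    by_contra hcon
    push_neg at hcon
    have h1 : dist (S.G (S.h (S.rk k))) (S.G S.ξ) < δ :=
      himp (by rw [Real.dist_eq]; exact hcon)
    have h2 : S.L ≤ S.E (S.rk k) := S.L_le k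
    rw [S.E_rk_val k] at h2
    rw [Real.dist_eq, abs_lt] at h1
    have h3 := h1.2
    simp only [hδ_def] at h3
    linarith
  set m₀ : ℝ := S.Mb ^ (-S.α-1) / 2 with hm₀_def
  have hm₀ : 0 < m₀ := by
    have := Real.rpow_pos_of_pos S.Mb_pos (-S.α-1)
    simp only [hm₀_def]; linarith
  obtain ⟨R₁, hR₁⟩ : ∃ R₁, ∀ r ≥ R₁, (((S.N:ℝ)^2-1)/4)/r^2 ≤ m₀ := by
    have ht2 : Tendsto (fun r : ℝ => r^2) atTop atTop := tendsto_pow_atTop (by norm_num)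
    have hd := Filter.Tendsto.div_atTop (tendsto_const_nhds (x := ((S.N:ℝ)^2-1)/4)) ht2
    exact eventually_atTop.mp (hd.eventually_le_const hm₀)
  have hq_ge : ∀ r, max R₁ S.rho ≤ r → m₀ ≤ S.qq r := by
    intro r hr
    have hrρ : S.rho ≤ r := le_trans (le_max_right _ _) hr
    have hrR : R₁ ≤ r := le_trans (le_max_left _ _) hr
    have h1 : S.Mb ^ (-S.α-1) ≤ S.h r ^ (-S.α-1) :=
      Real.rpow_le_rpow_of_nonpos (S.hpos r (lt_of_lt_of_le S.rho_pos hrρ)) (S.h_le r hrρ)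
        (by linarith [S.hα0])
    have h2 := hR₁ r hrR
    have h3 : S.qq r = S.h r ^ (-S.α-1) - (((S.N:ℝ)^2-1)/4)/r^2 := rfl
    rw [h3]
    simp only [hm₀_def] at h2 ⊢
    linarith
  obtain ⟨K, hK⟩ := (S.rk_tendsto.eventually_ge_atTop (max R₁ S.rho)).exists
  set Λ : ℝ := Real.pi / Real.sqrt m₀ with hΛ_def
  have hΛ : 0 < Λ := div_pos Real.pi_pos (Real.sqrt_pos.mpr hm₀)
  have hgapΛ : ∀ k, K ≤ k → S.rk (k+1) - S.rk k ≤ Λ := by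
    intro k hk
    apply S.gap_upper k m₀ hm₀
    intro t ht
    apply hq_ge
    calc max R₁ S.rho ≤ S.rk K := hK
      _ ≤ S.rk k := S.hmono.monotone hk
      _ ≤ t := ht.1
  set d₀ : ℝ := η/Λ with hd₀_def
  have hd₀ : 0 < d₀ := div_pos hη hΛ
  obtain ⟨C₂, hC₂, hlip⟩ := S.h1_lip
  have hρK : ∀ k, K ≤ k → S.rho ≤ S.rk k := fun k hk =>
    le_trans (le_max_right R₁ S.rho) (le_trans hK (S.hmono.monotone hk))
  have hdrop : ∀ k, K ≤ k →
      2 * (d₀/(2*C₂)) * (d₀/2)^2 / S.rk (k+1) ≤ S.E (S.rk k) - S.E (S.rk (k+1)) := by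
    intro k hk
    apply S.energy_drop k (hρK k hk) d₀ C₂ hd₀ hC₂ hlip
    have hgap := S.gap_pos k
    have hΔ : η ≤ |S.h (S.rk (k+1)) - S.h (S.rk k)| := by
      rcases S.alternation k with ⟨hlt, hgt⟩ | ⟨hgt, hlt⟩
      · rw [abs_of_pos (by linarith)]
        have h5 := hsep (k+1)
        rw [abs_of_pos (by linarith)] at h5
        linarith
      · rw [abs_of_neg (by linarith)]
        have h5 := hsep (k+1)
        rw [abs_of_neg (by linarith)] at h5
        linarith
    rw [hd₀_def]
    exact div_le_div₀ (abs_nonneg _) hΔ (by linarith) (hgapΛ k hk)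
  set AA : ℝ := S.rk K with hAA_def
  have hAA : 0 < AA := S.hrkpos K
  have hrk_lin : ∀ j : ℕ, S.rk (K+j) ≤ AA + Λ*(j:ℝ) := by
    intro j
    induction j with
    | zero => simp [hAA_def]
    | succ n ih =>
      have h6 := hgapΛ (K+n) (Nat.le_add_right K n)
      have h7 : S.rk (K+(n+1)) = S.rk (K+n+1) := by rw [← Nat.add_assoc]
      push_cast
      rw [h7]
      linarith
  set cst : ℝ := 2 * (d₀/(2*C₂)) * (d₀/2)^2 with hcst_def
  have hcst : 0 < cst := by simp only [hcst_def]; positivity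
  set f : ℕ → ℝ := fun j => S.E (S.rk (K+j)) with hf_def
  have hterm : ∀ j : ℕ, cst/(AA + Λ*((j:ℝ)+1)) ≤ f j - f (j+1) := by
    intro j
    have h1 := hdrop (K+j) (Nat.le_add_right K j)
    have h2 : S.rk (K+j+1) ≤ AA + Λ*((j:ℝ)+1) := by
      have h8 := hrk_lin (j+1)
      rw [← Nat.add_assoc] at h8
      push_cast at h8
      linarith
    have h3 : cst/(AA + Λ*((j:ℝ)+1)) ≤ cst/(S.rk (K+j+1)) :=
      div_le_div_of_nonneg_left hcst.le (S.hrkpos _) h2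
    have h4 : f j - f (j+1) = S.E (S.rk (K+j)) - S.E (S.rk (K+j+1)) := by
      simp only [hf_def]
      rw [← Nat.add_assoc]
    rw [h4]
    calc cst/(AA + Λ*((j:ℝ)+1)) ≤ cst/(S.rk (K+j+1)) := h3
      _ ≤ S.E (S.rk (K+j)) - S.E (S.rk (K+j+1)) := by
          calc cst/(S.rk (K+j+1)) = 2 * (d₀/(2*C₂)) * (d₀/2)^2 / S.rk (K+j+1) := by
                rw [hcst_def]
            _ ≤ _ := h1
  have hnonneg : ∀ j : ℕ, 0 ≤ cst/(AA + Λ*((j:ℝ)+1)) := by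
    intro j
    apply div_nonneg hcst.le
    have : (0:ℝ) ≤ (j:ℝ) := Nat.cast_nonneg j
    nlinarith
  have hsum_le : ∀ n : ℕ, ∑ j ∈ Finset.range n, cst/(AA + Λ*((j:ℝ)+1))
      ≤ S.E (S.rk K) - S.G S.ξ := by
    intro n
    have h1 : ∑ j ∈ Finset.range n, cst/(AA + Λ*((j:ℝ)+1))
        ≤ ∑ j ∈ Finset.range n, (f j - f (j+1)) :=
      Finset.sum_le_sum (fun j _ => hterm j)
    rw [Finset.sum_range_sub' f n] at h1
    have h2 : S.G S.ξ ≤ f n := by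
      simp only [hf_def]
      exact S.E_lower _ (S.rk_mem _)
    have h3 : f 0 = S.E (S.rk K) := by simp [hf_def]
    rw [h3] at h1
    linarith
  have hdiv : Tendsto (fun n => ∑ j ∈ Finset.range n, cst/(AA + Λ*((j:ℝ)+1)))
      atTop atTop := by
    apply (not_summable_iff_tendsto_nat_atTop_of_nonneg hnonneg).mp
    intro hsumm
    have hmul : ∀ j : ℕ, cst/(AA+Λ) * (1/((j:ℝ)+1)) ≤ cst/(AA + Λ*((j:ℝ)+1)) := by
      intro j
      rw [div_mul_div_comm, mul_one]
      apply div_le_div_of_nonneg_left hcst.le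
      · have : (0:ℝ) ≤ (j:ℝ) := Nat.cast_nonneg j
        nlinarith
      · have : (0:ℝ) ≤ (j:ℝ) := Nat.cast_nonneg j
        nlinarith
    have hs2 : Summable (fun j : ℕ => cst/(AA+Λ) * (1/((j:ℝ)+1))) :=
      Summable.of_nonneg_of_le (fun j => by positivity) hmul hsumm
    have hs3 : Summable (fun j : ℕ => 1/((j:ℝ)+1)) :=
      (summable_mul_left_iff (ne_of_gt (div_pos hcst (by linarith)))).mp hs2
    have hs4 : Summable (fun n : ℕ => 1/(n:ℝ)) := by
      rw [← summable_nat_add_iff 1]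
      exact hs3.congr (fun n => by push_cast; ring)
    exact Real.not_summable_one_div_natCast hs4
  obtain ⟨n, hn⟩ := (hdiv.eventually_gt_atTop (S.E (S.rk K) - S.G S.ξ)).exists
  linarith [hsum_le n]


lemma tendsto_G_h : Tendsto (fun r => S.G (S.h r)) atTop (nhds (S.G S.ξ)) := by
  have hE : Tendsto S.E atTop (nhds (S.G S.ξ)) := S.L_eq ▸ S.tendsto_E
  apply tendsto_of_tendsto_of_tendsto_of_le_of_le' tendsto_const_nhds hE
  · filter_upwards [eventually_gt_atTop (0:ℝ)] with r hr
    exact S.G_min _ (S.hpos r hr)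
  · filter_upwards [eventually_gt_atTop (0:ℝ)] with r hr
    exact S.G_le_E r hr

lemma h_tendsto : Tendsto S.h atTop (nhds S.ξ) := by
  rw [Metric.tendsto_atTop]
  intro ε hε
  set ε' : ℝ := min (ε/2) (S.ξ/2) with hε'_def
  have hε' : 0 < ε' := lt_min (by linarith) (by linarith [S.hξpos])
  have hε'ε : ε' < ε := lt_of_le_of_lt (min_le_left _ _) (by linarith)
  have hξε' : 0 < S.ξ - ε' := by
    have : ε' ≤ S.ξ/2 := min_le_right _ _
    linarith [S.hξpos]
  have hGl : S.G S.ξ < S.G (S.ξ - ε') :=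
    S.G_anti ⟨hξε', by linarith⟩ ⟨S.hξpos, le_refl _⟩ (by linarith)
  have hGr : S.G S.ξ < S.G (S.ξ + ε') :=
    S.G_mono (self_mem_Ici) (by simp; linarith) (by linarith)
  set δ' : ℝ := min (S.G (S.ξ - ε') - S.G S.ξ) (S.G (S.ξ + ε') - S.G S.ξ) with hδ'_def
  have hδ' : 0 < δ' := lt_min (by linarith) (by linarith)
  have hev := (Metric.tendsto_atTop.mp S.tendsto_G_h) δ' hδ'
  obtain ⟨R₀, hR₀⟩ := hev
  obtain ⟨R, hR₁, hR₂⟩ : ∃ R, R₀ ≤ R ∧ S.rho ≤ R :=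
    ⟨max R₀ S.rho, le_max_left _ _, le_max_right _ _⟩
  refine ⟨R, fun r hr => ?_⟩
  have hGr' := hR₀ r (le_trans hR₁ hr)
  rw [Real.dist_eq] at hGr'
  have hrρ : S.rho ≤ r := le_trans hR₂ hr
  have hr0 : (0:ℝ) < r := lt_of_lt_of_le S.rho_pos hrρ
  have hpos := S.hpos r hr0
  have hlow : S.ξ - ε' < S.h r := by
    by_contra hcon
    push_neg at hcon
    have : S.G (S.ξ - ε') ≤ S.G (S.h r) :=
      S.G_anti.antitoneOn ⟨hpos, by linarith⟩ ⟨hξε', by linarith⟩ hcon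
    have h9 := abs_lt.mp hGr'
    have h10 : δ' ≤ S.G (S.ξ - ε') - S.G S.ξ := min_le_left _ _
    linarith [h9.2]
  have hhigh : S.h r < S.ξ + ε' := by
    by_contra hcon
    push_neg at hcon
    have : S.G (S.ξ + ε') ≤ S.G (S.h r) :=
      S.G_mono.monotoneOn (by simp; linarith) (by simp; linarith [hcon]) hcon
    have h9 := abs_lt.mp hGr'
    have h10 : δ' ≤ S.G (S.ξ + ε') - S.G S.ξ := min_le_right _ _
    linarith [h9.2]
  rw [Real.dist_eq, abs_lt]
  constructor <;> [linarith; linarith]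

/-- the limit of the potential `qq` -/
def lam : ℝ := S.ξ ^ (-S.α-1)

lemma lam_pos : 0 < S.lam := Real.rpow_pos_of_pos S.hξpos _

lemma qq_tendsto : Tendsto S.qq atTop (nhds S.lam) := by
  have h1 : Tendsto (fun r => S.h r ^ (-S.α-1)) atTop (nhds (S.ξ ^ (-S.α-1))) := by
    have hc : ContinuousAt (fun x : ℝ => x ^ (-S.α-1)) S.ξ :=
      Real.continuousAt_rpow_const _ _ (Or.inl (ne_of_gt S.hξpos))
    exact hc.tendsto.comp S.h_tendsto
  have h2 : Tendsto (fun r : ℝ => (((S.N:ℝ)^2-1)/4)/r^2) atTop (nhds 0) :=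
    Filter.Tendsto.div_atTop tendsto_const_nhds (tendsto_pow_atTop (by norm_num))
  have := h1.sub h2
  exact (by simpa using this : Tendsto (fun r => S.h r ^ (-S.α-1) - (((S.N:ℝ)^2-1)/4)/r^2) atTop (nhds (S.ξ ^ (-S.α-1))))

lemma gaps_tendsto :
    Tendsto (fun k => S.rk (k+1) - S.rk k) atTop (nhds (Real.pi / Real.sqrt S.lam)) := by
  rw [Metric.tendsto_atTop]
  intro ε hε
  have hcont : ContinuousAt (fun x : ℝ => Real.pi / Real.sqrt x) S.lam := by
    apply ContinuousAt.div continuousAt_const Real.continuous_sqrt.continuousAt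
    exact ne_of_gt (Real.sqrt_pos.mpr S.lam_pos)
  obtain ⟨δ, hδ, himp⟩ := Metric.continuousAt_iff.mp hcont ε hε
  set δ' : ℝ := min (δ/2) (S.lam/2) with hδ'_def
  have hδ'0 : 0 < δ' := lt_min (by linarith) (by linarith [S.lam_pos])
  have hδ'δ : δ' < δ := lt_of_le_of_lt (min_le_left _ _) (by linarith)
  have hlamδ' : 0 < S.lam - δ' := by
    have : δ' ≤ S.lam/2 := min_le_right _ _
    linarith [S.lam_pos]
  obtain ⟨R, hR⟩ := Metric.tendsto_atTop.mp S.qq_tendsto δ' hδ'0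
  obtain ⟨K, hK⟩ := (S.rk_tendsto.eventually_ge_atTop R).exists
  refine ⟨K, fun k hk => ?_⟩
  have hql : ∀ t ∈ Icc (S.rk k) (S.rk (k+1)),
      S.lam - δ' ≤ S.qq t ∧ S.qq t ≤ S.lam + δ' := by
    intro t ht
    have htR : R ≤ t := le_trans hK (le_trans (S.hmono.monotone hk) ht.1)
    have := hR t htR
    rw [Real.dist_eq, abs_lt] at this
    constructor <;> linarith [this.1, this.2]
  have hup := S.gap_upper k (S.lam - δ') hlamδ' (fun t ht => (hql t ht).1)
  have hlo := S.gap_lower k (S.lam + δ') (by linarith [S.lam_pos]) (fun t ht => (hql t ht).2)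
  have h1 : dist (Real.pi / Real.sqrt (S.lam - δ')) (Real.pi / Real.sqrt S.lam) < ε := by
    apply himp
    rw [Real.dist_eq]
    rw [abs_of_neg (by linarith)]
    linarith
  have h2 : dist (Real.pi / Real.sqrt (S.lam + δ')) (Real.pi / Real.sqrt S.lam) < ε := by
    apply himp
    rw [Real.dist_eq]
    rw [abs_of_pos (by linarith)]
    linarith
  rw [Real.dist_eq] at h1 h2
  rw [Real.dist_eq, abs_lt]
  have h3 := abs_lt.mp h1
  have h4 := abs_lt.mp h2
  constructor
  · linarith [h4.1]
  · linarith [h3.2]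

lemma lam_eq : S.lam = (S.α * S.p) ^ ((1+S.α)/S.α) := by
  unfold lam
  rw [S.hξ, ← Real.rpow_mul (le_of_lt S.hαp)]
  congr 1
  have hα0 := S.hα0
  field_simp
  ring

lemma target_eq :
    Real.pi * (S.α * S.p) ^ (-((1 + S.α) / (2 * S.α))) = Real.pi / Real.sqrt S.lam := by
  rw [lam_eq, Real.sqrt_eq_rpow, ← Real.rpow_mul (le_of_lt S.hαp)]
  rw [Real.rpow_neg (le_of_lt S.hαp), div_eq_mul_inv]
  congr 2
  have hα0 := S.hα0
  field_simp

end Sol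


/-- For a nontrivial positive global `C²` solution of
`h'' + ((N-1)/r) h' = (1/α) h^(-α) - p` on `(0,∞)` with critical points enumerated as a
strictly increasing sequence `(r_k)`, the gaps converge:
`r_{k+1} - r_k → π (αp)^(-(1+α)/(2α))`. -/
theorem critical_point_gaps_limit
    (N : ℕ) (hN : 2 ≤ N) (α p : ℝ) (hα : 1 < α) (hp : 0 < p)
    (ξ : ℝ) (hξ : ξ = (α * p) ^ (-(1 / α)))
    (h : ℝ → ℝ)
    (hpos : ∀ r ∈ Ioi (0 : ℝ), 0 < h r)
    (hreg : ContDiffOn ℝ 2 h (Ioi 0))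
    (hode : ∀ r ∈ Ioi (0 : ℝ),
      deriv (deriv h) r + ((N : ℝ) - 1) / r * deriv h r = 1 / α * h r ^ (-α) - p)
    (hnontriv : ¬ ∀ r ∈ Ioi (0 : ℝ), h r = ξ)
    (rk : ℕ → ℝ) (hmono : StrictMono rk) (hrkpos : ∀ k, 0 < rk k)
    (hrange : {r : ℝ | 0 < r ∧ deriv h r = 0} = Set.range rk) :
    Tendsto (fun k => rk (k + 1) - rk k) atTop
      (nhds (Real.pi * (α * p) ^ (-((1 + α) / (2 * α))))) := by
  set S : Sol := ⟨N, hN, α, p, hα, hp, ξ, hξ, h, hpos, hreg, hode, hnontriv,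
    rk, hmono, hrkpos, hrange⟩ with hS_def
  have h1 : Real.pi * (α * p) ^ (-((1 + α) / (2 * α))) = Real.pi / Real.sqrt S.lam :=
    S.target_eq
  rw [h1]
  exact S.gaps_tendsto
end
end

section
/- Let N ≥ 2, α > 1 and p > 0. Let h : [0,∞) → ℝ be continuous with h(0) = 0, positive and C² on (0,∞), and satisfy h'' + ((N-1)/r)h' = (1/α)h^{-α} − p on (0,∞) (a radial rupture solution). Then for every δ > 0 there exists a constant c_1 > 0 such that h(r) ≥ c_1 · r^{2/(α+1)} for all r ∈ [0, δ]. -/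
open Set Filter
open Topology

noncomputable section

/-- Growth lower bound near the origin for radial rupture solutions of
`h'' + ((N-1)/r) h' = (1/α) h^(-α) - p`: for each `δ > 0` there is `c₁ > 0` with
`h(r) ≥ c₁ r^(2/(α+1))` on `[0, δ]`. -/
theorem rupture_growth_lower_bound
    (N : ℕ) (hN : 2 ≤ N) (α p : ℝ) (hα : 1 < α) (hp : 0 < p)
    (h : ℝ → ℝ)
    (hcont : ContinuousOn h (Ici 0))
    (h0 : h 0 = 0)
    (hpos : ∀ r ∈ Ioi (0 : ℝ), 0 < h r)
    (hreg : ContDiffOn ℝ 2 h (Ioi 0))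
    (hode : ∀ r ∈ Ioi (0 : ℝ),
      deriv (deriv h) r + ((N : ℝ) - 1) / r * deriv h r = 1 / α * h r ^ (-α) - p) :
    ∀ δ : ℝ, 0 < δ → ∃ c₁ : ℝ, 0 < c₁ ∧
      ∀ r ∈ Icc (0 : ℝ) δ, c₁ * r ^ (2 / (α + 1)) ≤ h r := by
  intro δ hδ
  have hα0 : (0 : ℝ) < α := by linarith
  have hα1 : (0 : ℝ) < α + 1 := by linarith
  have hN0 : (0 : ℝ) < N := by positivity
  -- regularity
  have hd1 : ∀ r ∈ Ioi (0 : ℝ), HasDerivAt h (deriv h r) r := by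
    intro r hr
    exact ((hreg.differentiableOn (by norm_num)).differentiableAt
      (isOpen_Ioi.mem_nhds hr)).hasDerivAt
  have hcd1 : ContDiffOn ℝ 1 (deriv h) (Ioi 0) :=
    hreg.deriv_of_isOpen isOpen_Ioi (by norm_num)
  have hd2 : ∀ r ∈ Ioi (0 : ℝ), HasDerivAt (deriv h) (deriv (deriv h) r) r := by
    intro r hr
    exact ((hcd1.differentiableOn one_ne_zero).differentiableAt
      (isOpen_Ioi.mem_nhds hr)).hasDerivAt
  have hdcont : ContinuousOn (deriv h) (Ioi 0) := hcd1.continuousOn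
  -- the weighted derivative φ
  set φ : ℝ → ℝ := fun t => t ^ (N - 1) * deriv h t with hφdef
  have hφd : ∀ t ∈ Ioi (0 : ℝ),
      HasDerivAt φ (t ^ (N - 1) * (1 / α * h t ^ (-α) - p)) t := by
    intro t ht
    have ht0 : (0 : ℝ) < t := ht
    have hprod := (hasDerivAt_pow (N - 1) t).mul (hd2 t ht)
    have hpow : t ^ (N - 1) = t ^ (N - 2) * t := by
      rw [← pow_succ]; congr 1; omega
    have hcast : ((N - 1 : ℕ) : ℝ) = (N : ℝ) - 1 := by
      push_cast [Nat.cast_sub (by omega : 1 ≤ N)]; ring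
    have hkey : t ^ (N - 1) * (1 / α * h t ^ (-α) - p)
        = ((N - 1 : ℕ) : ℝ) * t ^ (N - 1 - 1) * deriv h t
          + t ^ (N - 1) * deriv (deriv h) t := by
      rw [← hode t ht]
      have hN11 : N - 1 - 1 = N - 2 := by omega
      rw [hN11, hcast, hpow]
      field_simp
      ring
    rw [hkey]
    exact hprod
  -- smallness threshold
  have hM : (0 : ℝ) < (2 * α * p) ^ (-1 / α) := by
    apply Real.rpow_pos_of_pos; positivity
  set M : ℝ := (2 * α * p) ^ (-1 / α) with hMdef
  -- estimate: if 0 < h t ≤ M then the RHS dominates (1/(2α)) h t ^ (-α)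
  have hRHS : ∀ t : ℝ, 0 < t → h t < M →
      1 / (2 * α) * h t ^ (-α) ≤ 1 / α * h t ^ (-α) - p := by
    intro t ht hhM
    have hht : 0 < h t := hpos t ht
    have hXge : 2 * α * p ≤ h t ^ (-α) := by
      have := Real.rpow_le_rpow_of_nonpos hht hhM.le (by linarith : -α ≤ 0)
      have hMα : M ^ (-α) = 2 * α * p := by
        rw [hMdef, ← Real.rpow_mul (by positivity : (0:ℝ) ≤ 2 * α * p),
          show (-1 / α) * (-α) = 1 by field_simp, Real.rpow_one]
      linarith [this, hMα.ge.trans this]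
    set X := h t ^ (-α) with hX
    have hsplit : 1 / α * X - 1 / (2 * α) * X = 1 / (2 * α) * X := by
      field_simp; ring
    have hkey : p ≤ 1 / (2 * α) * X := by
      rw [div_mul_eq_mul_div, one_mul, le_div_iff₀ (by linarith : (0:ℝ) < 2 * α)]
      linarith
    linarith
  -- choose δ₀ ≤ δ with h < M on (0, δ₀]
  have hc0 : Tendsto h (𝓝[Ici 0] 0) (𝓝 0) := by
    have := hcont 0 self_mem_Ici
    rwa [ContinuousWithinAt, h0] at this
  have hev : ∀ᶠ t in 𝓝[Ici 0] (0 : ℝ), h t < M := hc0 (Iio_mem_nhds hM)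
  obtain ⟨ε, hε, hsub⟩ := Metric.mem_nhdsWithin_iff.mp hev
  set δ₀ : ℝ := min δ (ε / 2) with hδ₀def
  have hδ₀ : 0 < δ₀ := lt_min hδ (by linarith)
  have hδ₀le : δ₀ ≤ δ := min_le_left _ _
  have hsmall : ∀ t ∈ Ioc (0 : ℝ) δ₀, h t < M := by
    intro t ht
    apply hsub
    constructor
    · rw [Metric.mem_ball, Real.dist_eq, sub_zero, abs_of_pos ht.1]
      exact lt_of_le_of_lt (le_trans ht.2 (min_le_right _ _)) (by linarith)
    · exact le_of_lt ht.1
  -- φ is strictly increasing on (0, δ₀]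
  have hφc : ContinuousOn φ (Ioc 0 δ₀) :=
    (continuous_pow (N - 1)).continuousOn.mul (hdcont.mono Ioc_subset_Ioi_self)
  have hφderiv_pos : ∀ t ∈ Ioo (0 : ℝ) δ₀, 0 < deriv φ t := by
    intro t ht
    rw [(hφd t ht.1).deriv]
    have hX : 0 < h t ^ (-α) := Real.rpow_pos_of_pos (hpos t ht.1) _
    have h1 := hRHS t ht.1 (hsmall t ⟨ht.1, ht.2.le⟩)
    have h2 : 0 < 1 / (2 * α) * h t ^ (-α) := by positivity
    exact mul_pos (pow_pos ht.1 _) (lt_of_lt_of_le h2 h1)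
  have hφmono : StrictMonoOn φ (Ioc 0 δ₀) := by
    apply strictMonoOn_of_deriv_pos (convex_Ioc 0 δ₀) hφc
    rwa [interior_Ioc]
  -- h' > 0 on (0, δ₀]
  have hder_pos : ∀ r ∈ Ioc (0 : ℝ) δ₀, 0 < deriv h r := by
    intro r hr
    by_contra hcon
    push_neg at hcon
    have hφr : φ r ≤ 0 := mul_nonpos_of_nonneg_of_nonpos (pow_nonneg hr.1.le _) hcon
    have hφs : ∀ s ∈ Ioo (0 : ℝ) r, deriv h s < 0 := by
      intro s hs
      have hsm : s ∈ Ioc (0 : ℝ) δ₀ := ⟨hs.1, hs.2.le.trans hr.2⟩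
      have : φ s < φ r := hφmono hsm hr hs.2
      by_contra h'
      push_neg at h'
      have : 0 ≤ φ s := mul_nonneg (pow_nonneg hs.1.le _) h'
      linarith
    have hanti : StrictAntiOn h (Icc 0 r) := by
      apply strictAntiOn_of_deriv_neg (convex_Icc 0 r) (hcont.mono Icc_subset_Ici_self)
      intro x hx
      rw [interior_Icc] at hx
      exact hφs x hx
    have := hanti (left_mem_Icc.mpr hr.1.le) (right_mem_Icc.mpr hr.1.le) hr.1
    rw [h0] at this
    exact absurd (hpos r hr.1) (by linarith)
  -- h is monotone on (0, δ₀]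
  have hmono : MonotoneOn h (Ioc 0 δ₀) := by
    refine (strictMonoOn_of_deriv_pos (convex_Ioc 0 δ₀)
      (hcont.mono (Ioc_subset_Icc_self.trans Icc_subset_Ici_self)) ?_).monotoneOn
    intro x hx
    rw [interior_Ioc] at hx
    exact hder_pos x ⟨hx.1, hx.2.le⟩
  -- first integration: pointwise lower bound on h'
  have key1 : ∀ r ∈ Ioc (0 : ℝ) δ₀, h r ^ (-α) * r / (2 * α * N) ≤ deriv h r := by
    intro r hr
    set C : ℝ := h r ^ (-α) / (2 * α * N) with hCdef
    have hC : 0 < C := by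
      have := Real.rpow_pos_of_pos (hpos r hr.1) (-α)
      positivity
    set F : ℝ → ℝ := fun t => t ^ (N - 1) * deriv h t - C * t ^ N with hFdef
    have hFd : ∀ t ∈ Ioi (0 : ℝ), HasDerivAt F
        (t ^ (N - 1) * (1 / α * h t ^ (-α) - p) - C * (N * t ^ (N - 1))) t := by
      intro t ht
      exact (hφd t ht).sub ((hasDerivAt_pow N t).const_mul C)
    have hFmono : MonotoneOn F (Ioc 0 r) := by
      apply monotoneOn_of_deriv_nonneg (convex_Ioc 0 r)
      · apply ContinuousOn.sub
        · exact (continuous_pow (N-1)).continuousOn.mul (hdcont.mono Ioc_subset_Ioi_self)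
        · exact (continuous_const.mul (continuous_pow N)).continuousOn
      · rw [interior_Ioc]
        intro x hx
        exact ((hFd x hx.1).differentiableAt).differentiableWithinAt
      · rw [interior_Ioc]
        intro t ht
        rw [(hFd t ht.1).deriv]
        have htm : t ∈ Ioc (0 : ℝ) δ₀ := ⟨ht.1, ht.2.le.trans hr.2⟩
        have hle : h t ≤ h r := hmono htm hr ht.2.le
        have hXle : h r ^ (-α) ≤ h t ^ (-α) :=
          Real.rpow_le_rpow_of_nonpos (hpos t ht.1) hle (by linarith)
        have h1 := hRHS t ht.1 (hsmall t htm)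
        have hCN : C * ((N : ℝ) * t ^ (N - 1)) = 1 / (2 * α) * h r ^ (-α) * t ^ (N - 1) := by
          rw [hCdef]
          field_simp
        rw [hCN]
        have htpow : (0 : ℝ) ≤ t ^ (N - 1) := pow_nonneg ht.1.le _
        have h2 : 1 / (2 * α) * h r ^ (-α) ≤ 1 / (2 * α) * h t ^ (-α) := by
          apply mul_le_mul_of_nonneg_left hXle
          positivity
        nlinarith [mul_le_mul_of_nonneg_left h1 htpow, mul_le_mul_of_nonneg_left h2 htpow]
    have hFr : 0 ≤ F r := by
      have hten : Tendsto (fun s : ℝ => -C * s ^ N) (𝓝[>] (0 : ℝ)) (𝓝 0) := by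
        have : Tendsto (fun s : ℝ => -C * s ^ N) (𝓝 (0 : ℝ)) (𝓝 (-C * 0 ^ N)) :=
          (continuous_const.mul (continuous_pow N)).tendsto 0
        rw [zero_pow (by omega : N ≠ 0), mul_zero] at this
        exact this.mono_left nhdsWithin_le_nhds
      refine le_of_tendsto hten ?_
      filter_upwards [Ioc_mem_nhdsGT hr.1] with s hs
      have h1 : F s ≤ F r := hFmono hs ⟨hr.1, le_refl r⟩ hs.2
      have h2 : 0 < s ^ (N - 1) * deriv h s :=
        mul_pos (pow_pos hs.1 _) (hder_pos s ⟨hs.1, hs.2.trans hr.2⟩)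
      have : -C * s ^ N ≤ F s := by
        rw [hFdef]
        simp only
        nlinarith
      linarith
    -- unpack F r ≥ 0
    have hrpow : (0 : ℝ) < r ^ (N - 1) := pow_pos hr.1 _
    have hpowN : r ^ N = r ^ (N - 1) * r := by
      rw [← pow_succ]
      congr 1
      omega
    have hCr : C * r ≤ deriv h r := by
      rw [hFdef] at hFr
      simp only at hFr
      rw [hpowN] at hFr
      nlinarith
    calc h r ^ (-α) * r / (2 * α * N) = C * r := by rw [hCdef]; ring
      _ ≤ deriv h r := hCr
  -- second integration: lower bound on h^(α+1)
  set K : ℝ := (α + 1) / (4 * α * N) with hKdef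
  have hK : 0 < K := by positivity
  have key2 : ∀ s ∈ Icc (0 : ℝ) δ₀, K * s ^ 2 ≤ h s ^ (α + 1) := by
    set G : ℝ → ℝ := fun s => h s ^ (α + 1) - K * s ^ 2 with hGdef
    have hGd : ∀ s ∈ Ioo (0 : ℝ) δ₀, HasDerivAt G
        ((α + 1) * h s ^ α * deriv h s - K * (2 * s)) s := by
      intro s hs
      have h1 := (hd1 s hs.1).rpow_const (p := α + 1) (Or.inl (hpos s hs.1).ne')
      rw [show α + 1 - 1 = α by ring] at h1
      have h2 := (hasDerivAt_pow 2 s).const_mul K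
      have := h1.sub h2
      refine this.congr_deriv ?_
      push_cast
      ring
    have hGmono : MonotoneOn G (Icc 0 δ₀) := by
      apply monotoneOn_of_deriv_nonneg (convex_Icc 0 δ₀)
      · apply ContinuousOn.sub
        · exact (hcont.mono Icc_subset_Ici_self).rpow_const
            (fun x _ => Or.inr (by linarith))
        · exact (continuous_const.mul (continuous_pow 2)).continuousOn
      · rw [interior_Icc]
        intro x hx
        exact ((hGd x hx).differentiableAt).differentiableWithinAt
      · rw [interior_Icc]
        intro s hs
        rw [(hGd s hs).deriv]
        have hkey := key1 s ⟨hs.1, hs.2.le⟩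
        have hhs := hpos s hs.1
        have hprod : h s ^ α * h s ^ (-α) = 1 := by
          rw [← Real.rpow_add hhs]
          simp
        have hcoef : (0 : ℝ) ≤ (α + 1) * h s ^ α := by positivity
        have h3 : (α + 1) * h s ^ α * (h s ^ (-α) * s / (2 * α * N))
            ≤ (α + 1) * h s ^ α * deriv h s := by
          apply mul_le_mul_of_nonneg_left _ hcoef
          calc h s ^ (-α) * s / (2 * α * N) = h s ^ (-α) * s / (2 * α * ↑N) := rfl
            _ ≤ deriv h s := hkey
        have h4 : (α + 1) * h s ^ α * (h s ^ (-α) * s / (2 * α * N))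
            = (α + 1) * s / (2 * α * N) := by
          calc (α + 1) * h s ^ α * (h s ^ (-α) * s / (2 * α * ↑N))
              = (α + 1) * s / (2 * α * ↑N) * (h s ^ α * h s ^ (-α)) := by ring
            _ = (α + 1) * s / (2 * α * ↑N) := by rw [hprod, mul_one]
        have h5 : K * (2 * s) = (α + 1) * s / (2 * α * N) := by
          rw [hKdef]
          field_simp
          ring
        rw [h5]
        linarith [h3, h4.symm.le]
    have hG0 : G 0 = 0 := by
      rw [hGdef]
      simp [h0, Real.zero_rpow (by positivity : α + 1 ≠ 0)]
    intro s hs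
    have := hGmono (left_mem_Icc.mpr hδ₀.le) hs hs.1
    rw [hG0, hGdef] at this
    simp only at this
    linarith
  -- convert to the rpow bound on [0, δ₀]
  set c₀ : ℝ := K ^ (1 / (α + 1)) with hc₀def
  have hc₀ : 0 < c₀ := Real.rpow_pos_of_pos hK _
  have bound0 : ∀ r ∈ Icc (0 : ℝ) δ₀, c₀ * r ^ (2 / (α + 1)) ≤ h r := by
    intro r hr
    rcases eq_or_lt_of_le hr.1 with hr0 | hr0
    · rw [← hr0, Real.zero_rpow (by positivity : 2 / (α + 1) ≠ 0), mul_zero, h0]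
    · -- compare (α+1)-th rpow powers
      have hhr := hpos r hr0
      have ha : (0 : ℝ) ≤ c₀ * r ^ (2 / (α + 1)) := by positivity
      by_contra hcon
      push_neg at hcon
      have hlt : h r ^ (α + 1) < (c₀ * r ^ (2 / (α + 1))) ^ (α + 1) :=
        Real.rpow_lt_rpow hhr.le hcon hα1
      have heq : (c₀ * r ^ (2 / (α + 1))) ^ (α + 1) = K * r ^ 2 := by
        rw [Real.mul_rpow hc₀.le (Real.rpow_nonneg hr.1 _)]
        rw [hc₀def, ← Real.rpow_natCast r 2]
        rw [← Real.rpow_mul hK.le, ← Real.rpow_mul hr.1]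
        rw [show 1 / (α + 1) * (α + 1) = 1 by field_simp]
        rw [show 2 / (α + 1) * (α + 1) = 2 by field_simp]
        norm_num
      rw [heq] at hlt
      exact absurd (key2 r ⟨hr.1, hr.2⟩) (by linarith)
  -- assemble: use compactness on [δ₀, δ]
  obtain ⟨x₀, hx₀mem, hx₀min⟩ := isCompact_Icc.exists_isMinOn
    (nonempty_Icc.mpr hδ₀le) (hcont.mono (fun x hx => le_trans hδ₀.le hx.1))
  have hm : 0 < h x₀ := hpos x₀ (lt_of_lt_of_le hδ₀ hx₀mem.1)
  have hδβ : (0 : ℝ) < δ ^ (2 / (α + 1)) := Real.rpow_pos_of_pos hδ _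
  refine ⟨min c₀ (h x₀ / δ ^ (2 / (α + 1))), lt_min hc₀ (by positivity), ?_⟩
  intro r hr
  rcases le_or_gt r δ₀ with hcase | hcase
  · calc min c₀ (h x₀ / δ ^ (2 / (α + 1))) * r ^ (2 / (α + 1))
        ≤ c₀ * r ^ (2 / (α + 1)) :=
          mul_le_mul_of_nonneg_right (min_le_left _ _) (Real.rpow_nonneg hr.1 _)
      _ ≤ h r := bound0 r ⟨hr.1, hcase⟩
  · have hrβ : r ^ (2 / (α + 1)) ≤ δ ^ (2 / (α + 1)) :=
      Real.rpow_le_rpow hr.1 hr.2 (by positivity)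
    calc min c₀ (h x₀ / δ ^ (2 / (α + 1))) * r ^ (2 / (α + 1))
        ≤ h x₀ / δ ^ (2 / (α + 1)) * δ ^ (2 / (α + 1)) := by
          apply mul_le_mul (min_le_right _ _) hrβ (Real.rpow_nonneg hr.1 _) (by positivity)
      _ = h x₀ := div_mul_cancel₀ _ hδβ.ne'
      _ ≤ h r := hx₀min ⟨hcase.le, hr.2⟩
end
end
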